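/- arXiv:1301.3447 — 5 statements merged into one kernel-verified Lean document; each statement's English description precedes it below -/
import Mathlib

section
/- Let A ⊆ ℝ be open and invex with respect to η : A × A → ℝ (i.e., for all u,v ∈ A and t ∈ [0,1], u + t·η(v,u) ∈ A), let a,b ∈ A with η(a,b) ≠ 0, and let f : A → ℝ be three times differentiable with f''' integrable on the segment from b to b+η(a,b). Then ∫_b^{b+η(a,b)} f(x)dx - η(a,b)·(f(b)+f(b+η(a,b)))/2 - (η(a,b)^2/12)·(f'(b) - f'(b+η(a,b))) = (η(a,b)^4/12)·∫_0^1 t(1-t)(2t-1)·f'''(b+t·η(a,b)) dt. -/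
open MeasureTheory intervalIntegral Set

lemma hh_poly_ibp (g g1 g2 g3 : ℝ → ℝ)
    (hg : ∀ t ∈ Icc (0:ℝ) 1, HasDerivAt g (g1 t) t)
    (hg1 : ∀ t ∈ Icc (0:ℝ) 1, HasDerivAt g1 (g2 t) t)
    (hg2 : ∀ t ∈ Icc (0:ℝ) 1, HasDerivAt g2 (g3 t) t)
    (h3 : IntervalIntegrable g3 volume 0 1) :
    (∫ t in (0:ℝ)..1, g t) - (g 0 + g 1) / 2 - (1/12) * (g1 0 - g1 1)
      = (1/12) * ∫ t in (0:ℝ)..1, t * (1 - t) * (2 * t - 1) * g3 t := by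
  have huicc : uIcc (0:ℝ) 1 = Icc (0:ℝ) 1 := uIcc_of_le zero_le_one
  set p : ℝ → ℝ := fun t => -2*t^3 + 3*t^2 - t with hp_def
  set p' : ℝ → ℝ := fun t => -6*t^2 + 6*t - 1 with hp'_def
  set p'' : ℝ → ℝ := fun t => -12*t + 6 with hp''_def
  have hp : ∀ t : ℝ, HasDerivAt p (p' t) t := by
    intro t
    have h1 : HasDerivAt (fun x : ℝ => -2*x^3 + 3*x^2 - x)
        (-2 * (3 * t^2) + 3 * (2 * t^1) - 1) t := by
      exact (((hasDerivAt_pow 3 t).const_mul (-2:ℝ)).add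
        ((hasDerivAt_pow 2 t).const_mul (3:ℝ))).sub (hasDerivAt_id t)
    convert h1 using 1; simp [hp'_def]; ring
  have hp' : ∀ t : ℝ, HasDerivAt p' (p'' t) t := by
    intro t
    have h1 : HasDerivAt (fun x : ℝ => -6*x^2 + 6*x - 1)
        (-6 * (2 * t^1) + 6 * 1 - 0) t := by
      exact (((hasDerivAt_pow 2 t).const_mul (-6:ℝ)).add
        ((hasDerivAt_id t).const_mul (6:ℝ))).sub (hasDerivAt_const t 1)
    convert h1 using 1; simp [hp''_def]; ring
  have hp'' : ∀ t : ℝ, HasDerivAt p'' (-12) t := by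
    intro t
    have h1 : HasDerivAt (fun x : ℝ => -12*x + 6) (-12 * 1 + 0) t :=
      ((hasDerivAt_id t).const_mul (-12:ℝ)).add (hasDerivAt_const t 6)
    convert h1 using 1; ring
  have cg1 : ContinuousOn g1 (uIcc (0:ℝ) 1) := by
    rw [huicc]; exact fun t ht => (hg1 t ht).continuousAt.continuousWithinAt
  have cg2 : ContinuousOn g2 (uIcc (0:ℝ) 1) := by
    rw [huicc]; exact fun t ht => (hg2 t ht).continuousAt.continuousWithinAt
  have ig1 : IntervalIntegrable g1 volume 0 1 := cg1.intervalIntegrable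
  have ig2 : IntervalIntegrable g2 volume 0 1 := cg2.intervalIntegrable
  have cp : Continuous p :=
    ((continuous_const.mul (continuous_pow 3)).add
      (continuous_const.mul (continuous_pow 2))).sub continuous_id
  have cp' : Continuous p' :=
    ((continuous_const.mul (continuous_pow 2)).add
      (continuous_const.mul continuous_id)).sub continuous_const
  have cp'' : Continuous p'' :=
    (continuous_const.mul continuous_id).add continuous_const
  -- IBP 3
  have I3 : ∫ t in (0:ℝ)..1, p t * g3 t
      = p 1 * g2 1 - p 0 * g2 0 - ∫ t in (0:ℝ)..1, p' t * g2 t := by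
    apply intervalIntegral.integral_mul_deriv_eq_deriv_mul
      (fun t _ => hp t) (fun t ht => hg2 t (huicc ▸ ht))
      (cp'.intervalIntegrable 0 1) h3
  have I2 : ∫ t in (0:ℝ)..1, p' t * g2 t
      = p' 1 * g1 1 - p' 0 * g1 0 - ∫ t in (0:ℝ)..1, p'' t * g1 t := by
    apply intervalIntegral.integral_mul_deriv_eq_deriv_mul
      (fun t _ => hp' t) (fun t ht => hg1 t (huicc ▸ ht))
      (cp''.intervalIntegrable 0 1) ig2
  have I1 : ∫ t in (0:ℝ)..1, p'' t * g1 t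
      = p'' 1 * g 1 - p'' 0 * g 0 - ∫ t in (0:ℝ)..1, (-12) * g t := by
    apply intervalIntegral.integral_mul_deriv_eq_deriv_mul
      (fun t _ => hp'' t) (fun t ht => hg t (huicc ▸ ht))
      (continuous_const.intervalIntegrable 0 1) ig1
  have hc : ∫ t in (0:ℝ)..1, (-12) * g t = -12 * ∫ t in (0:ℝ)..1, g t :=
    integral_const_mul _ _
  have hker : ∫ t in (0:ℝ)..1, t * (1 - t) * (2 * t - 1) * g3 t
      = ∫ t in (0:ℝ)..1, p t * g3 t := by
    apply integral_congr
    intro t _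
    simp only [hp_def]; ring
  rw [hker, I3, I2, I1, hc]
  simp only [hp_def, hp'_def, hp''_def]
  ring

theorem hh_lemma_invex (A : Set ℝ) (hA : IsOpen A) (η : ℝ → ℝ → ℝ)
    (hinvex : ∀ u ∈ A, ∀ v ∈ A, ∀ t ∈ Icc (0:ℝ) 1, u + t * η v u ∈ A)
    (a b : ℝ) (ha : a ∈ A) (hb : b ∈ A) (hη : η a b ≠ 0) (f : ℝ → ℝ)
    (hf1 : ∀ x ∈ A, DifferentiableAt ℝ f x)
    (hf2 : ∀ x ∈ A, DifferentiableAt ℝ (deriv f) x)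
    (hf3 : ∀ x ∈ A, DifferentiableAt ℝ (deriv (deriv f)) x)
    (hint : IntervalIntegrable (deriv (deriv (deriv f))) volume b (b + η a b)) :
    (∫ x in b..(b + η a b), f x) - η a b * (f b + f (b + η a b)) / 2
      - ((η a b) ^ 2 / 12) * (deriv f b - deriv f (b + η a b))
    = ((η a b) ^ 4 / 12) *
        ∫ t in (0:ℝ)..1, t * (1 - t) * (2 * t - 1) *
          deriv (deriv (deriv f)) (b + t * η a b) := by
  set h : ℝ := η a b with hh
  have hmem : ∀ t ∈ Icc (0:ℝ) 1, b + t * h ∈ A := fun t ht => hinvex b hb a ha t ht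
  set g : ℝ → ℝ := fun t => f (b + t * h) with hg_def
  set g1 : ℝ → ℝ := fun t => deriv f (b + t * h) * h with hg1_def
  set g2 : ℝ → ℝ := fun t => deriv (deriv f) (b + t * h) * h * h with hg2_def
  set g3 : ℝ → ℝ := fun t => deriv (deriv (deriv f)) (b + t * h) * h * h * h with hg3_def
  have hinner : ∀ t : ℝ, HasDerivAt (fun s : ℝ => b + s * h) h t := by
    intro t
    have := ((hasDerivAt_id t).mul_const h).const_add b
    simpa using this
  have hg : ∀ t ∈ Icc (0:ℝ) 1, HasDerivAt g (g1 t) t := by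
    intro t ht
    have := HasDerivAt.comp t ((hf1 _ (hmem t ht)).hasDerivAt) (hinner t)
    simpa [hg_def, hg1_def, Function.comp_def] using this
  have hg1 : ∀ t ∈ Icc (0:ℝ) 1, HasDerivAt g1 (g2 t) t := by
    intro t ht
    have := (HasDerivAt.comp t ((hf2 _ (hmem t ht)).hasDerivAt) (hinner t)).mul_const h
    simpa [hg1_def, hg2_def, Function.comp] using this
  have hg2 : ∀ t ∈ Icc (0:ℝ) 1, HasDerivAt g2 (g3 t) t := by
    intro t ht
    have := ((HasDerivAt.comp t ((hf3 _ (hmem t ht)).hasDerivAt) (hinner t)).mul_const h).mul_const h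
    simpa [hg2_def, hg3_def, Function.comp] using this
  have hI0 : IntervalIntegrable (fun t => deriv (deriv (deriv f)) (b + t * h)) volume 0 1 := by
    have s2 := (hint.comp_add_left b).comp_mul_left (c := h)
    rw [show (b - b) / h = (0:ℝ) by simp, show (b + h - b) / h = (1:ℝ) by field_simp; ring] at s2
    simpa [mul_comm] using s2
  have ig3 : IntervalIntegrable g3 volume 0 1 := ((hI0.mul_const h).mul_const h).mul_const h
  have key := hh_poly_ibp g g1 g2 g3 hg hg1 hg2 ig3
  have e0 : g 0 = f b := by simp [hg_def]
  have e1 : g 1 = f (b + h) := by simp [hg_def]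
  have e2 : g1 0 = deriv f b * h := by simp [hg1_def]
  have e3 : g1 1 = deriv f (b + h) * h := by simp [hg1_def]
  have e4 : (∫ t in (0:ℝ)..1, t * (1 - t) * (2 * t - 1) * g3 t)
      = h ^ 3 * ∫ t in (0:ℝ)..1, t * (1 - t) * (2 * t - 1)
          * deriv (deriv (deriv f)) (b + t * h) := by
    rw [← intervalIntegral.integral_const_mul]
    apply integral_congr
    intro t _
    simp only [hg3_def]; ring
  have e5 : (∫ x in b..(b + h), f x) = h * ∫ t in (0:ℝ)..1, g t := by
    have hc : (∫ t in (0:ℝ)..1, g t) = ∫ t in (0:ℝ)..1, f (h * t + b) := by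
      apply integral_congr
      intro t _
      simp only [hg_def]; ring_nf
    rw [hc, integral_comp_mul_add f hη b]
    rw [smul_eq_mul, ← mul_assoc, mul_inv_cancel₀ hη]
    norm_num [add_comm]
  rw [e0, e1, e2, e3, e4] at key
  rw [e5]
  linear_combination h * key
end

section
/- Let A ⊆ ℝ be open and invex with respect to η, a,b ∈ A with η(a,b) ≠ 0, f : A → ℝ three times differentiable, and q ≥ 1. If |f'''|^q is preinvex on A (i.e., |f'''(u + t·η(v,u))|^q ≤ (1-t)|f'''(u)|^q + t|f'''(v)|^q for all u,v ∈ A, t ∈ [0,1]), then |∫_b^{b+η(a,b)} f(x)dx - η(a,b)·(f(b)+f(b+η(a,b)))/2 - (η(a,b)²/12)·(f'(b)-f'(b+η(a,b)))| ≤ (η(a,b)^4/192)·((|f'''(a)|^q + |f'''(b)|^q)/2)^(1/q). -/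
open MeasureTheory intervalIntegral Set Real

lemma teo21_intW : ∫ t in (0:ℝ)..1, |t*(1-t)*(2*t-1)| = 1/16 := by
  have hc : Continuous fun t : ℝ => |t*(1-t)*(2*t-1)| := by continuity
  have hanti : ∀ t : ℝ, HasDerivAt (fun t : ℝ => t^3 - t^4/2 - t^2/2)
      (t*(1-t)*(2*t-1)) t := by
    intro t
    have := ((hasDerivAt_pow 3 t).fun_sub ((hasDerivAt_pow 4 t).div_const 2)).fun_sub
      ((hasDerivAt_pow 2 t).div_const 2)
    convert! this using 1
    push_cast; ring
  have h1 : ∫ t in (0:ℝ)..(1/2), |t*(1-t)*(2*t-1)| = 1/32 := by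
    have hcongr : EqOn (fun t : ℝ => |t*(1-t)*(2*t-1)|)
        (fun t : ℝ => -(t*(1-t)*(2*t-1))) (uIcc (0:ℝ) (1/2)) := by
      intro t ht
      rw [uIcc_of_le (by norm_num)] at ht
      have h0 : (0:ℝ) ≤ t := ht.1
      have h2 : t ≤ 1/2 := ht.2
      have : t*(1-t)*(2*t-1) ≤ 0 := by
        nlinarith [mul_nonneg (mul_nonneg h0 (show (0:ℝ) ≤ 1-t by linarith))
          (show (0:ℝ) ≤ 1-2*t by linarith)]
      simp [abs_of_nonpos this]
    rw [intervalIntegral.integral_congr hcongr]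
    have := intervalIntegral.integral_eq_sub_of_hasDerivAt (a := 0) (b := 1/2)
      (f := fun t : ℝ => -(t^3 - t^4/2 - t^2/2))
      (f' := fun t : ℝ => -(t*(1-t)*(2*t-1)))
      (fun t _ => (hanti t).neg)
      (Continuous.intervalIntegrable (by continuity) _ _)
    rw [this]; norm_num
  have h2 : ∫ t in (1/2:ℝ)..1, |t*(1-t)*(2*t-1)| = 1/32 := by
    have hcongr : EqOn (fun t : ℝ => |t*(1-t)*(2*t-1)|)
        (fun t : ℝ => t*(1-t)*(2*t-1)) (uIcc (1/2:ℝ) 1) := by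
      intro t ht
      rw [uIcc_of_le (by norm_num)] at ht
      have h0 : (1/2:ℝ) ≤ t := ht.1
      have h2 : t ≤ 1 := ht.2
      have : 0 ≤ t*(1-t)*(2*t-1) := by
        exact mul_nonneg (mul_nonneg (by linarith) (by linarith)) (by linarith)
      simp [abs_of_nonneg this]
    rw [intervalIntegral.integral_congr hcongr]
    have := intervalIntegral.integral_eq_sub_of_hasDerivAt (a := 1/2) (b := 1)
      (f := fun t : ℝ => t^3 - t^4/2 - t^2/2)
      (f' := fun t : ℝ => t*(1-t)*(2*t-1))
      (fun t _ => hanti t)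
      (Continuous.intervalIntegrable (by continuity) _ _)
    rw [this]; norm_num
  rw [← intervalIntegral.integral_add_adjacent_intervals
    (Continuous.intervalIntegrable hc 0 (1/2)) (Continuous.intervalIntegrable hc (1/2) 1),
    h1, h2]
  norm_num

lemma teo21_intWt : ∫ t in (0:ℝ)..1, |t*(1-t)*(2*t-1)| * t = 1/32 := by
  have hc : Continuous fun t : ℝ => |t*(1-t)*(2*t-1)| * t := by continuity
  have hanti : ∀ t : ℝ, HasDerivAt (fun t : ℝ => 3*t^4/4 - 2*t^5/5 - t^3/3)
      (t*(1-t)*(2*t-1)*t) t := by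
    intro t
    have := ((((hasDerivAt_pow 4 t).const_mul (3:ℝ)).div_const 4).fun_sub
      (((hasDerivAt_pow 5 t).const_mul (2:ℝ)).div_const 5)).fun_sub
      ((hasDerivAt_pow 3 t).div_const 3)
    convert! this using 1
    push_cast; ring
  have h1 : ∫ t in (0:ℝ)..(1/2), |t*(1-t)*(2*t-1)| * t = 7/960 := by
    have hcongr : EqOn (fun t : ℝ => |t*(1-t)*(2*t-1)| * t)
        (fun t : ℝ => -(t*(1-t)*(2*t-1)*t)) (uIcc (0:ℝ) (1/2)) := by
      intro t ht
      rw [uIcc_of_le (by norm_num)] at ht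
      have h0 : (0:ℝ) ≤ t := ht.1
      have h2 : t ≤ 1/2 := ht.2
      have : t*(1-t)*(2*t-1) ≤ 0 := by
        nlinarith [mul_nonneg (mul_nonneg h0 (show (0:ℝ) ≤ 1-t by linarith))
          (show (0:ℝ) ≤ 1-2*t by linarith)]
      simp only [abs_of_nonpos this]; ring
    rw [intervalIntegral.integral_congr hcongr]
    have := intervalIntegral.integral_eq_sub_of_hasDerivAt (a := 0) (b := 1/2)
      (f := fun t : ℝ => -(3*t^4/4 - 2*t^5/5 - t^3/3))
      (f' := fun t : ℝ => -(t*(1-t)*(2*t-1)*t))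
      (fun t _ => (hanti t).neg)
      (Continuous.intervalIntegrable (by continuity) _ _)
    rw [this]; norm_num
  have h2 : ∫ t in (1/2:ℝ)..1, |t*(1-t)*(2*t-1)| * t = 23/960 := by
    have hcongr : EqOn (fun t : ℝ => |t*(1-t)*(2*t-1)| * t)
        (fun t : ℝ => t*(1-t)*(2*t-1)*t) (uIcc (1/2:ℝ) 1) := by
      intro t ht
      rw [uIcc_of_le (by norm_num)] at ht
      have h0 : (1/2:ℝ) ≤ t := ht.1
      have h2 : t ≤ 1 := ht.2
      have : 0 ≤ t*(1-t)*(2*t-1) := by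
        exact mul_nonneg (mul_nonneg (by linarith) (by linarith)) (by linarith)
      simp only [abs_of_nonneg this]
    rw [intervalIntegral.integral_congr hcongr]
    have := intervalIntegral.integral_eq_sub_of_hasDerivAt (a := 1/2) (b := 1)
      (f := fun t : ℝ => 3*t^4/4 - 2*t^5/5 - t^3/3)
      (f' := fun t : ℝ => t*(1-t)*(2*t-1)*t)
      (fun t _ => hanti t)
      (Continuous.intervalIntegrable (by continuity) _ _)
    rw [this]; norm_num
  rw [← intervalIntegral.integral_add_adjacent_intervals
    (Continuous.intervalIntegrable hc 0 (1/2)) (Continuous.intervalIntegrable hc (1/2) 1),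
    h1, h2]
  norm_num

theorem teo21 (A : Set ℝ) (hA : IsOpen A) (η : ℝ → ℝ → ℝ)
    (hinvex : ∀ u ∈ A, ∀ v ∈ A, ∀ t ∈ Icc (0:ℝ) 1, u + t * η v u ∈ A)
    (a b : ℝ) (ha : a ∈ A) (hb : b ∈ A) (hη : η a b ≠ 0) (f : ℝ → ℝ)
    (hf1 : ∀ x ∈ A, DifferentiableAt ℝ f x)
    (hf2 : ∀ x ∈ A, DifferentiableAt ℝ (deriv f) x)
    (hf3 : ∀ x ∈ A, DifferentiableAt ℝ (deriv (deriv f)) x)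
    (hint : IntervalIntegrable (deriv (deriv (deriv f))) volume b (b + η a b))
    (q : ℝ) (hq : 1 ≤ q)
    (hpre : ∀ u ∈ A, ∀ v ∈ A, ∀ t ∈ Icc (0:ℝ) 1,
      |deriv (deriv (deriv f)) (u + t * η v u)| ^ q
        ≤ (1 - t) * |deriv (deriv (deriv f)) u| ^ q
          + t * |deriv (deriv (deriv f)) v| ^ q) :
    |(∫ x in b..(b + η a b), f x) - η a b * (f b + f (b + η a b)) / 2
      - ((η a b) ^ 2 / 12) * (deriv f b - deriv f (b + η a b))|
    ≤ ((η a b) ^ 4 / 192) *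
        ((|deriv (deriv (deriv f)) a| ^ q + |deriv (deriv (deriv f)) b| ^ q) / 2)
          ^ (1 / q) := by
  set e := η a b with he
  set c := b + e with hc
  set f₁ := deriv f with hf₁
  set f₂ := deriv (deriv f) with hf₂
  set f₃ := deriv (deriv (deriv f)) with hf₃
  -- the η-path lies in A
  have hsub : uIcc b c ⊆ A := by
    intro x hx
    have h01 : (x - b)/e ∈ Icc (0:ℝ) 1 := by
      rcases le_total 0 e with hepos | heneg
      · have he' : 0 < e := lt_of_le_of_ne hepos (Ne.symm hη)
        rw [uIcc_of_le (by simp [hc]; linarith)] at hx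
        constructor
        · exact div_nonneg (by linarith [hx.1]) he'.le
        · rw [div_le_one he']; have := hx.2; rw [hc] at this; linarith
      · have he' : e < 0 := lt_of_le_of_ne heneg hη
        rw [uIcc_of_ge (by simp [hc]; linarith)] at hx
        constructor
        · rw [le_div_iff_of_neg he']; have := hx.2; linarith
        · rw [div_le_one_of_neg he']; have := hx.1; rw [hc] at this; linarith
      
    have hmem := hinvex b hb a ha _ h01
    rw [← he] at hmem
    have hx' : b + (x - b)/e * e = x := by field_simp; ring
    rwa [hx'] at hmem
  -- regularity on the path
  have hd1 : ∀ x ∈ uIcc b c, HasDerivAt f (f₁ x) x := fun x hx => (hf1 x (hsub hx)).hasDerivAt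
  have hd2 : ∀ x ∈ uIcc b c, HasDerivAt f₁ (f₂ x) x := fun x hx => (hf2 x (hsub hx)).hasDerivAt
  have hd3 : ∀ x ∈ uIcc b c, HasDerivAt f₂ (f₃ x) x := fun x hx => (hf3 x (hsub hx)).hasDerivAt
  have hcont1 : ContinuousOn f₁ (uIcc b c) :=
    fun x hx => ((hf2 x (hsub hx)).continuousAt).continuousWithinAt
  have hcont2 : ContinuousOn f₂ (uIcc b c) :=
    fun x hx => ((hf3 x (hsub hx)).continuousAt).continuousWithinAt
  have hi2 : IntervalIntegrable f₂ volume b c := hcont2.intervalIntegrable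
  have hi1 : IntervalIntegrable f₁ volume b c := hcont1.intervalIntegrable
  -- the cubic kernel and its derivatives
  set P : ℝ → ℝ := fun x => (3*(x-b)^2*e - (x-b)*e^2 - 2*(x-b)^3)/12 with hP
  set P₁ : ℝ → ℝ := fun x => (6*(x-b)*e - e^2 - 6*(x-b)^2)/12 with hP₁
  set P₂ : ℝ → ℝ := fun x => e/2 - (x-b) with hP₂
  have hidb : ∀ x : ℝ, HasDerivAt (fun y : ℝ => y - b) 1 x :=
    fun x => (hasDerivAt_id x).sub_const b
  have hdP : ∀ x : ℝ, HasDerivAt P (P₁ x) x := by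
    intro x
    have h2 : HasDerivAt (fun y : ℝ => (y - b)^2) (2*(x-b)) x := by
      simpa using (hidb x).fun_pow 2
    have h3 : HasDerivAt (fun y : ℝ => (y - b)^3) (3*(x-b)^2) x := by
      simpa using (hidb x).fun_pow 3
    have := ((((h2.const_mul (3:ℝ)).mul_const e).fun_sub ((hidb x).mul_const (e^2))).fun_sub
      (h3.const_mul (2:ℝ))).div_const 12
    convert! this using 1
    ring
  have hdP₁ : ∀ x : ℝ, HasDerivAt P₁ (P₂ x) x := by
    intro x
    have h2 : HasDerivAt (fun y : ℝ => (y - b)^2) (2*(x-b)) x := by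
      simpa using (hidb x).fun_pow 2
    have := ((((hidb x).const_mul (6:ℝ)).mul_const e).fun_sub
      (hasDerivAt_const x (e^2))).fun_sub (h2.const_mul (6:ℝ)) |>.div_const 12
    convert! this using 1
    simp [hP₂]; ring
  have hdP₂ : ∀ x : ℝ, HasDerivAt P₂ (-1) x := by
    intro x
    have := (hasDerivAt_const x (e/2)).fun_sub (hidb x)
    simpa using this
  have hcP : Continuous P := by fun_prop
  have hcP₁ : Continuous P₁ := by fun_prop
  have hcP₂ : Continuous P₂ := by fun_prop
  -- integration by parts, three times
  have ibp1 : ∫ x in b..c, P x * f₃ x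
      = P c * f₂ c - P b * f₂ b - ∫ x in b..c, P₁ x * f₂ x :=
    integral_mul_deriv_eq_deriv_mul (fun x _ => hdP x) hd3
      (hcP₁.intervalIntegrable b c) hint
  have ibp2 : ∫ x in b..c, P₁ x * f₂ x
      = P₁ c * f₁ c - P₁ b * f₁ b - ∫ x in b..c, P₂ x * f₁ x :=
    integral_mul_deriv_eq_deriv_mul (fun x _ => hdP₁ x) hd2
      (hcP₂.intervalIntegrable b c) hi2
  have ibp3 : ∫ x in b..c, P₂ x * f₁ x
      = P₂ c * f c - P₂ b * f b - ∫ x in b..c, (-1) * f x :=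
    integral_mul_deriv_eq_deriv_mul (fun x _ => hdP₂ x) hd1
      (continuous_const.intervalIntegrable b c) hi1
  have hnegint : ∫ x in b..c, (-1 : ℝ) * f x = -∫ x in b..c, f x := by
    simp [neg_one_mul, intervalIntegral.integral_neg]
  -- the key identity
  have key : (∫ x in b..c, f x) - e * (f b + f c) / 2 - (e^2/12) * (f₁ b - f₁ c)
      = ∫ x in b..c, P x * f₃ x := by
    rw [ibp1, ibp2, ibp3, hnegint]
    simp only [hP, hP₁, hP₂, hc]
    ring
  -- substitute to [0,1]
  have hGint : IntervalIntegrable (fun x => P x * f₃ x) volume b c :=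
    hint.continuousOn_mul hcP.continuousOn
  have hsubst : (∫ x in b..c, P x * f₃ x)
      = e • ∫ t in (0:ℝ)..1, P (e*t+b) * f₃ (e*t+b) := by
    have h0 := intervalIntegral.integral_comp_mul_add (a := 0) (b := 1)
      (fun x => P x * f₃ x) hη b
    simp only [mul_zero, zero_add, mul_one] at h0
    rw [h0, smul_smul, mul_inv_cancel₀ hη, one_smul, add_comm e b, ← hc]
  have hGcomp : IntervalIntegrable (fun t => P (e*t+b) * f₃ (e*t+b)) volume 0 1 := by
    have h1 := hGint.comp_add_left b
    simp only [sub_self, hc, add_sub_cancel_left] at h1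
    have h2 := h1.comp_mul_left (c := e)
    simp only [zero_div, div_self hη] at h2
    have h3 : (fun t : ℝ => P (e*t+b) * f₃ (e*t+b))
        = fun t : ℝ => P (b + e*t) * f₃ (b + e*t) := by
      funext t; rw [add_comm]
    rw [h3]
    exact h2
  rw [key, hsubst]
  have habs : |e • ∫ t in (0:ℝ)..1, P (e*t+b) * f₃ (e*t+b)|
      = |e| * |∫ t in (0:ℝ)..1, P (e*t+b) * f₃ (e*t+b)| := by
    rw [smul_eq_mul, abs_mul]
  rw [habs]
  set Aq := |f₃ a| ^ q with hAqdef
  set Bq := |f₃ b| ^ q with hBqdef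
  have hq0 : (0:ℝ) < q := lt_of_lt_of_le one_pos hq
  set r := 1/q with hr
  have hr0 : 0 < r := by rw [hr]; positivity
  have hr1 : r ≤ 1 := by rw [hr, div_le_one hq0]; exact hq
  have hAq : 0 ≤ Aq := Real.rpow_nonneg (abs_nonneg _) q
  have hBq : 0 ≤ Bq := Real.rpow_nonneg (abs_nonneg _) q
  set c₀ := (Aq + Bq)/2 with hc₀def
  -- pointwise bound from preinvexity
  have hFb : ∀ t ∈ Icc (0:ℝ) 1, |f₃ (e*t+b)| ^ q ≤ (1-t)*Bq + t*Aq := by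
    intro t ht
    have h1 := hpre b hb a ha t ht
    rw [← he] at h1
    rw [show e*t+b = b + t*e by ring]
    exact h1
  have hF : ∀ t ∈ Icc (0:ℝ) 1, |f₃ (e*t+b)| ≤ ((1-t)*Bq + t*Aq) ^ r := by
    intro t ht
    have h2 : (|f₃ (e*t+b)| ^ q) ^ r ≤ ((1-t)*Bq + t*Aq) ^ r :=
      Real.rpow_le_rpow (Real.rpow_nonneg (abs_nonneg _) q) (hFb t ht) hr0.le
    have h3 : (|f₃ (e*t+b)| ^ q) ^ r = |f₃ (e*t+b)| := by
      rw [← Real.rpow_mul (abs_nonneg _), mul_one_div, div_self hq0.ne', Real.rpow_one]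
    rwa [h3] at h2
  have hPval : ∀ t : ℝ, |P (e*t+b)| = |e|^3/12 * |t*(1-t)*(2*t-1)| := by
    intro t
    have h4 : P (e*t+b) = e^3 * (t*(1-t)*(2*t-1))/12 := by simp only [hP]; ring
    rw [h4, abs_div, abs_mul, abs_pow]
    norm_num
    ring
  have he4 : |e| * |e|^3 = e^4 := by
    have h5 : |e| * |e|^3 = |e|^4 := by ring
    rw [h5, ← abs_pow]
    exact abs_of_nonneg (by positivity)
  have habsle : |∫ t in (0:ℝ)..1, P (e*t+b) * f₃ (e*t+b)|
      ≤ ∫ t in (0:ℝ)..1, |P (e*t+b) * f₃ (e*t+b)| :=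
    intervalIntegral.abs_integral_le_integral_abs zero_le_one
  rcases eq_or_lt_of_le (show (0:ℝ) ≤ c₀ by rw [hc₀def]; linarith) with hc₀ | hc₀
  · -- degenerate case : both third-derivative values vanish
    have hA0 : Aq = 0 := by rw [hc₀def] at hc₀; linarith
    have hB0 : Bq = 0 := by rw [hc₀def] at hc₀; linarith
    have hzero : ∫ t in (0:ℝ)..1, |P (e*t+b) * f₃ (e*t+b)| ≤ 0 := by
      have hmono := intervalIntegral.integral_mono_on (μ := volume)
        (f := fun t => |P (e*t+b) * f₃ (e*t+b)|) (g := fun _ => (0:ℝ))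
        zero_le_one hGcomp.abs intervalIntegrable_const ?_
      · simpa using hmono
      · intro t ht
        have h6 := hF t ht
        show |P (e*t+b) * f₃ (e*t+b)| ≤ (0:ℝ)
        have h7 : ((1-t)*Bq + t*Aq) ^ r = 0 := by
          rw [hA0, hB0]
          simp [Real.zero_rpow hr0.ne']
        rw [abs_mul]
        have h8 : |f₃ (e*t+b)| ≤ 0 := by rw [h7] at h6; exact h6
        have h9 : |f₃ (e*t+b)| = 0 := le_antisymm h8 (abs_nonneg _)
        simp [h9]
    have hRHS : e^4/192 * c₀ ^ r = 0 := by
      rw [← hc₀, Real.zero_rpow hr0.ne', mul_zero]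
    calc |e| * |∫ t in (0:ℝ)..1, P (e*t+b) * f₃ (e*t+b)|
        ≤ |e| * 0 := by
          apply mul_le_mul_of_nonneg_left _ (abs_nonneg e)
          exact le_trans habsle hzero
      _ ≤ e^4/192 * c₀ ^ r := by rw [hRHS, mul_zero]
  · -- main case
    have htan : ∀ s : ℝ, 0 ≤ s → s ^ r ≤ (r*s + (1-r)*c₀) * c₀ ^ (r-1) := by
      intro s hs
      have hgm := Real.geom_mean_le_arith_mean2_weighted hr0.le
        (by linarith : (0:ℝ) ≤ 1 - r) hs hc₀.le (by ring)
      calc s ^ r = (s ^ r * c₀ ^ (1-r)) * c₀ ^ (r-1) := by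
            rw [mul_assoc, ← Real.rpow_add hc₀]
            norm_num
        _ ≤ (r*s + (1-r)*c₀) * c₀ ^ (r-1) :=
            mul_le_mul_of_nonneg_right hgm (Real.rpow_nonneg hc₀.le _)
    set g : ℝ → ℝ := fun t => (|e|^3/12) * |t*(1-t)*(2*t-1)|
        * ((r*((1-t)*Bq + t*Aq) + (1-r)*c₀) * c₀^(r-1)) with hgdef
    have hcg : Continuous g := by
      apply Continuous.mul
      · apply Continuous.mul continuous_const
        apply Continuous.abs
        fun_prop
      · fun_prop
    have hptw : ∀ t ∈ Icc (0:ℝ) 1, |P (e*t+b) * f₃ (e*t+b)| ≤ g t := by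
      intro t ht
      have hφ : 0 ≤ (1-t)*Bq + t*Aq :=
        add_nonneg (mul_nonneg (by linarith [ht.2]) hBq) (mul_nonneg ht.1 hAq)
      have h6 : |f₃ (e*t+b)| ≤ (r*((1-t)*Bq + t*Aq) + (1-r)*c₀) * c₀^(r-1) :=
        le_trans (hF t ht) (htan _ hφ)
      rw [abs_mul, hPval t, hgdef]
      exact mul_le_mul_of_nonneg_left h6 (by positivity)
    have hmono : ∫ t in (0:ℝ)..1, |P (e*t+b) * f₃ (e*t+b)| ≤ ∫ t in (0:ℝ)..1, g t :=
      intervalIntegral.integral_mono_on zero_le_one hGcomp.abs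
        (hcg.intervalIntegrable 0 1) hptw
    have hgval : ∫ t in (0:ℝ)..1, g t = |e|^3 * c₀ ^ r / 192 := by
      have hgeq : g = fun t => ((|e|^3/12) * ((r*Bq + (1-r)*c₀)*c₀^(r-1)))
          * |t*(1-t)*(2*t-1)|
          + ((|e|^3/12) * (r*(Aq-Bq)*c₀^(r-1))) * (|t*(1-t)*(2*t-1)| * t) := by
        funext t
        rw [hgdef]
        ring
      have hiW : IntervalIntegrable (fun t : ℝ => ((|e|^3/12) * ((r*Bq + (1-r)*c₀)*c₀^(r-1)))
          * |t*(1-t)*(2*t-1)|) volume 0 1 :=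
        Continuous.intervalIntegrable (by fun_prop) 0 1
      have hiWt : IntervalIntegrable (fun t : ℝ => ((|e|^3/12) * (r*(Aq-Bq)*c₀^(r-1)))
          * (|t*(1-t)*(2*t-1)| * t)) volume 0 1 :=
        Continuous.intervalIntegrable (by fun_prop) 0 1
      rw [hgeq, intervalIntegral.integral_add hiW hiWt,
        intervalIntegral.integral_const_mul, intervalIntegral.integral_const_mul,
        teo21_intW, teo21_intWt]
      have hpow : c₀ ^ r = c₀ ^ (r-1) * c₀ := by
        rw [show r = (r-1)+1 by ring, Real.rpow_add_one hc₀.ne']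
        ring_nf
      rw [hpow, hc₀def]
      ring
    calc |e| * |∫ t in (0:ℝ)..1, P (e*t+b) * f₃ (e*t+b)|
        ≤ |e| * (|e|^3 * c₀ ^ r / 192) := by
          apply mul_le_mul_of_nonneg_left _ (abs_nonneg e)
          rw [← hgval]
          exact le_trans habsle hmono
      _ = e^4/192 * c₀ ^ r := by rw [← he4]; ring
end

section
/- Let A ⊆ ℝ be open and invex with respect to η, a,b ∈ A with η(a,b) ≠ 0, f : A → ℝ three times differentiable with |f'''| preinvex on A. Then |∫_b^{b+η(a,b)} f(x)dx - η(a,b)·(f(b)+f(b+η(a,b)))/2 - (η(a,b)²/12)·(f'(b)-f'(b+η(a,b)))| ≤ (η(a,b)^4/384)·(|f'''(a)| + |f'''(b)|). -/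
open MeasureTheory intervalIntegral Set Real

-- antiderivative check lemma
lemma co21_phi_deriv (c P Q t : ℝ) :
    HasDerivAt (fun t : ℝ => c * (Q * (t^4/2 - t^3 + t^2/2) + (P-Q) * (2*t^5/5 - 3*t^4/4 + t^3/3)) / 12)
      ((2*t^3 - 3*t^2 + t)/12 * (c * ((1-t)*Q + t*P))) t := by
  have H := (((((hasDerivAt_pow 4 t).div_const 2).sub (hasDerivAt_pow 3 t)).add
      ((hasDerivAt_pow 2 t).div_const 2)).const_mul Q |>.add
      (((((hasDerivAt_pow 5 t).const_mul 2).div_const 5).sub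
        (((hasDerivAt_pow 4 t).const_mul 3).div_const 4)).add
        ((hasDerivAt_pow 3 t).div_const 3) |>.const_mul (P-Q)) |>.const_mul c).div_const 12
  refine H.congr_deriv ?_
  push_cast
  ring

lemma co21_poly_int (c P Q : ℝ) :
    ∫ t in (0:ℝ)..1, |(-(2*t^3) + 3*t^2 - t)/12| * (c * ((1-t)*Q + t*P)) = c * (P + Q) / 384 := by
  have hcont : Continuous fun t : ℝ => |(-(2*t^3) + 3*t^2 - t)/12| * (c * ((1-t)*Q + t*P)) := by
    fun_prop
  have hpcont : Continuous fun t : ℝ => (2*t^3 - 3*t^2 + t)/12 * (c * ((1-t)*Q + t*P)) := by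
    fun_prop
  have h1 : ∫ t in (0:ℝ)..(1/2), |(-(2*t^3) + 3*t^2 - t)/12| * (c * ((1-t)*Q + t*P))
      = ∫ t in (0:ℝ)..(1/2), (2*t^3 - 3*t^2 + t)/12 * (c * ((1-t)*Q + t*P)) := by
    apply integral_congr
    intro t ht
    rw [uIcc_of_le (by norm_num)] at ht
    obtain ⟨ht0, ht1⟩ := ht
    beta_reduce
    have hneg : (-(2*t^3) + 3*t^2 - t)/12 ≤ 0 := by nlinarith [mul_nonneg ht0 (mul_nonneg (by linarith : (0:ℝ) ≤ 1 - 2*t) (by linarith : (0:ℝ) ≤ 1 - t))]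
    rw [abs_of_nonpos hneg]
    ring
  have h2 : ∫ t in (1/2:ℝ)..1, |(-(2*t^3) + 3*t^2 - t)/12| * (c * ((1-t)*Q + t*P))
      = ∫ t in (1/2:ℝ)..1, -((2*t^3 - 3*t^2 + t)/12 * (c * ((1-t)*Q + t*P))) := by
    apply integral_congr
    intro t ht
    rw [uIcc_of_le (by norm_num)] at ht
    obtain ⟨ht0, ht1⟩ := ht
    beta_reduce
    have hpos : (0:ℝ) ≤ (-(2*t^3) + 3*t^2 - t)/12 := by nlinarith [mul_nonneg (by linarith : (0:ℝ) ≤ t) (mul_nonneg (by linarith : (0:ℝ) ≤ 2*t - 1) (by linarith : (0:ℝ) ≤ 1 - t))]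
    rw [abs_of_nonneg hpos]
    ring
  have e1 : ∫ t in (0:ℝ)..(1/2), (2*t^3 - 3*t^2 + t)/12 * (c * ((1-t)*Q + t*P))
      = (fun t : ℝ => c * (Q * (t^4/2 - t^3 + t^2/2) + (P-Q) * (2*t^5/5 - 3*t^4/4 + t^3/3)) / 12) (1/2)
        - (fun t : ℝ => c * (Q * (t^4/2 - t^3 + t^2/2) + (P-Q) * (2*t^5/5 - 3*t^4/4 + t^3/3)) / 12) 0 :=
    integral_eq_sub_of_hasDerivAt (fun x _ => co21_phi_deriv c P Q x)
      (hpcont.intervalIntegrable _ _)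
  have e2 : ∫ t in (1/2:ℝ)..1, -((2*t^3 - 3*t^2 + t)/12 * (c * ((1-t)*Q + t*P)))
      = (fun t : ℝ => -(c * (Q * (t^4/2 - t^3 + t^2/2) + (P-Q) * (2*t^5/5 - 3*t^4/4 + t^3/3)) / 12)) 1
        - (fun t : ℝ => -(c * (Q * (t^4/2 - t^3 + t^2/2) + (P-Q) * (2*t^5/5 - 3*t^4/4 + t^3/3)) / 12)) (1/2) :=
    integral_eq_sub_of_hasDerivAt (fun x _ => (co21_phi_deriv c P Q x).neg)
      (hpcont.neg.intervalIntegrable _ _)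
  rw [← integral_add_adjacent_intervals (a := (0:ℝ)) (b := (1/2:ℝ)) (c := (1:ℝ))
      (hcont.intervalIntegrable _ _) (hcont.intervalIntegrable _ _),
    h1, h2, e1, e2]
  norm_num
  ring




theorem co21 (A : Set ℝ) (hA : IsOpen A) (η : ℝ → ℝ → ℝ)
    (hinvex : ∀ u ∈ A, ∀ v ∈ A, ∀ t ∈ Icc (0:ℝ) 1, u + t * η v u ∈ A)
    (a b : ℝ) (ha : a ∈ A) (hb : b ∈ A) (hη : η a b ≠ 0) (f : ℝ → ℝ)
    (hf1 : ∀ x ∈ A, DifferentiableAt ℝ f x)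
    (hf2 : ∀ x ∈ A, DifferentiableAt ℝ (deriv f) x)
    (hf3 : ∀ x ∈ A, DifferentiableAt ℝ (deriv (deriv f)) x)
    (hint : IntervalIntegrable (deriv (deriv (deriv f))) volume b (b + η a b))
    (hpre : ∀ u ∈ A, ∀ v ∈ A, ∀ t ∈ Icc (0:ℝ) 1,
      |deriv (deriv (deriv f)) (u + t * η v u)|
        ≤ (1 - t) * |deriv (deriv (deriv f)) u| + t * |deriv (deriv (deriv f)) v|) :
    |(∫ x in b..(b + η a b), f x) - η a b * (f b + f (b + η a b)) / 2
      - ((η a b) ^ 2 / 12) * (deriv f b - deriv f (b + η a b))|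
    ≤ ((η a b) ^ 4 / 384) *
        (|deriv (deriv (deriv f)) a| + |deriv (deriv (deriv f)) b|) := by
  set e := η a b with he
  have mem : ∀ t ∈ Icc (0:ℝ) 1, b + t * e ∈ A := fun t ht => hinvex b hb a ha t ht
  have haff : ∀ t : ℝ, HasDerivAt (fun s : ℝ => b + s * e) e t := fun t => by
    simpa using ((hasDerivAt_id t).mul_const e).const_add b
  -- derivatives of the composed functions on [0,1]
  have hG : ∀ t ∈ uIcc (0:ℝ) 1, HasDerivAt (fun s => f (b + s * e)) (e * deriv f (b + t * e)) t := by
    intro t ht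
    rw [uIcc_of_le zero_le_one] at ht
    have := ((hf1 _ (mem t ht)).hasDerivAt).comp t (haff t)
    exact this.congr_deriv (mul_comm _ _)
  have hG1 : ∀ t ∈ uIcc (0:ℝ) 1,
      HasDerivAt (fun s => e * deriv f (b + s * e)) (e ^ 2 * deriv (deriv f) (b + t * e)) t := by
    intro t ht
    rw [uIcc_of_le zero_le_one] at ht
    have := (((hf2 _ (mem t ht)).hasDerivAt).comp t (haff t)).const_mul e
    refine this.congr_deriv ?_
    ring
  have hG2 : ∀ t ∈ uIcc (0:ℝ) 1,
      HasDerivAt (fun s => e ^ 2 * deriv (deriv f) (b + s * e))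
        (e ^ 3 * deriv (deriv (deriv f)) (b + t * e)) t := by
    intro t ht
    rw [uIcc_of_le zero_le_one] at ht
    have := (((hf3 _ (mem t ht)).hasDerivAt).comp t (haff t)).const_mul (e ^ 2)
    refine this.congr_deriv ?_
    ring
  -- kernel derivatives
  have hk : ∀ t : ℝ, HasDerivAt (fun t : ℝ => (-(2*t^3) + 3*t^2 - t)/12)
      ((-(6*t^2) + 6*t - 1)/12) t := by
    intro t
    have H := ((((hasDerivAt_pow 3 t).const_mul 2).neg.add ((hasDerivAt_pow 2 t).const_mul 3)).sub
      (hasDerivAt_id t)).div_const 12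
    refine H.congr_deriv ?_
    push_cast
    ring
  have hk1 : ∀ t : ℝ, HasDerivAt (fun t : ℝ => (-(6*t^2) + 6*t - 1)/12) (1/2 - t) t := by
    intro t
    have H := ((((hasDerivAt_pow 2 t).const_mul 6).neg.add ((hasDerivAt_id t).const_mul 6)).sub
      (hasDerivAt_const t 1)).div_const 12
    refine H.congr_deriv ?_
    push_cast
    ring
  have hk2 : ∀ t : ℝ, HasDerivAt (fun t : ℝ => 1/2 - t) (-1 : ℝ) t := by
    intro t
    exact ((hasDerivAt_const t (1/2:ℝ)).sub (hasDerivAt_id t)).congr_deriv (by norm_num)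
  -- integrability on [0,1]
  have hcontaff : Continuous fun t : ℝ => b + t * e := by fun_prop
  have hcomp_cont : ∀ (g : ℝ → ℝ), (∀ x ∈ A, DifferentiableAt ℝ g x) →
      ContinuousOn (fun t => g (b + t * e)) (uIcc (0:ℝ) 1) := by
    intro g hg
    rw [uIcc_of_le zero_le_one]
    intro t ht
    exact ContinuousAt.comp_continuousWithinAt (g := g) (f := fun t : ℝ => b + t * e)
      (hg _ (mem t ht)).continuousAt hcontaff.continuousWithinAt
  have hi0 : IntervalIntegrable (fun t => f (b + t * e)) volume 0 1 :=
    (hcomp_cont f hf1).intervalIntegrable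
  have hi1 : IntervalIntegrable (fun t => e * deriv f (b + t * e)) volume 0 1 :=
    ((hcomp_cont (deriv f) hf2).const_smul (e:ℝ)).intervalIntegrable
  have hi2 : IntervalIntegrable (fun t => e ^ 2 * deriv (deriv f) (b + t * e)) volume 0 1 :=
    ((hcomp_cont (deriv (deriv f)) hf3).const_smul (e^2:ℝ)).intervalIntegrable
  have hi3 : IntervalIntegrable (fun t => e ^ 3 * deriv (deriv (deriv f)) (b + t * e)) volume 0 1 := by
    have s1 : IntervalIntegrable (fun x => deriv (deriv (deriv f)) (x + b)) volume 0 e := by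
      have := hint.comp_add_right b
      simpa using this
    have s2 : IntervalIntegrable (fun x => deriv (deriv (deriv f)) (x * e + b)) volume 0 1 := by
      have := s1.comp_mul_right (c := e)
      rw [zero_div, div_self hη] at this
      simpa [hη, he] using this
    have s3 : IntervalIntegrable (fun x => deriv (deriv (deriv f)) (b + x * e)) volume 0 1 := by
      have heq : (fun x : ℝ => deriv (deriv (deriv f)) (x * e + b))
          = fun x : ℝ => deriv (deriv (deriv f)) (b + x * e) := by
        funext x; congr 1; ring
      rwa [heq] at s2
    simpa using s3.const_mul (e ^ 3)
  have hik : IntervalIntegrable (fun t : ℝ => (-(6*t^2) + 6*t - 1)/12) volume 0 1 :=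
    (by fun_prop : Continuous fun t : ℝ => (-(6*t^2) + 6*t - 1)/12).intervalIntegrable _ _
  have hik2 : IntervalIntegrable (fun t : ℝ => 1/2 - t) volume 0 1 :=
    (by fun_prop : Continuous fun t : ℝ => 1/2 - t).intervalIntegrable _ _
  have hikm1 : IntervalIntegrable (fun _ : ℝ => (-1:ℝ)) volume 0 1 :=
    intervalIntegrable_const
  -- integration by parts, three times
  have IBP1 : ∫ t in (0:ℝ)..1, ((-(2*t^3) + 3*t^2 - t)/12) * (e ^ 3 * deriv (deriv (deriv f)) (b + t * e))
      = - ∫ t in (0:ℝ)..1, ((-(6*t^2) + 6*t - 1)/12) * (e ^ 2 * deriv (deriv f) (b + t * e)) := by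
    rw [integral_mul_deriv_eq_deriv_mul (fun x _ => hk x) hG2 hik hi3]
    norm_num
  have IBP2 : ∫ t in (0:ℝ)..1, ((-(6*t^2) + 6*t - 1)/12) * (e ^ 2 * deriv (deriv f) (b + t * e))
      = (-1/12) * (e * deriv f (b + e)) - (-1/12) * (e * deriv f b)
        - ∫ t in (0:ℝ)..1, (1/2 - t) * (e * deriv f (b + t * e)) := by
    rw [integral_mul_deriv_eq_deriv_mul (fun x _ => hk1 x) hG1 hik2 hi2]
    norm_num
  have IBP3 : ∫ t in (0:ℝ)..1, (1/2 - t) * (e * deriv f (b + t * e))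
      = (-(1:ℝ)/2) * f (b + e) - (1/2) * f b + ∫ t in (0:ℝ)..1, f (b + t * e) := by
    rw [integral_mul_deriv_eq_deriv_mul (fun x _ => hk2 x) hG hikm1 hi1]
    have hb1 : b + 1 * e = b + e := by ring
    have hb0 : b + 0 * e = b := by ring
    rw [hb1, hb0]
    have hneg : (fun t => (-1:ℝ) * f (b + t * e)) = fun t => -(f (b + t * e)) := by
      funext t; ring
    rw [hneg, intervalIntegral.integral_neg]
    ring
  -- change of variables for the main integral
  have hchg : (∫ x in b..(b + e), f x) = e * ∫ t in (0:ℝ)..1, f (b + t * e) := by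
    have H := smul_integral_comp_mul_add (a := (0:ℝ)) (b := (1:ℝ)) f e b
    simp only [smul_eq_mul, mul_zero, zero_add, mul_one] at H
    have heq : (fun t : ℝ => f (e * t + b)) = fun t : ℝ => f (b + t * e) := by
      funext t; congr 1; ring
    rw [heq] at H
    rw [add_comm b e, ← H]
  -- the identity
  have key : (∫ x in b..(b + e), f x) - e * (f b + f (b + e)) / 2
      - (e ^ 2 / 12) * (deriv f b - deriv f (b + e))
      = e * ∫ t in (0:ℝ)..1, ((-(2*t^3) + 3*t^2 - t)/12) * (e ^ 3 * deriv (deriv (deriv f)) (b + t * e)) := by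
    rw [IBP1, IBP2, IBP3, hchg]
    all_goals ring
  rw [key, abs_mul]
  have habs : |∫ t in (0:ℝ)..1, ((-(2*t^3) + 3*t^2 - t)/12) * (e ^ 3 * deriv (deriv (deriv f)) (b + t * e))|
      ≤ ∫ t in (0:ℝ)..1, |((-(2*t^3) + 3*t^2 - t)/12) * (e ^ 3 * deriv (deriv (deriv f)) (b + t * e))| :=
    abs_integral_le_integral_abs zero_le_one
  have hintprod : IntervalIntegrable
      (fun t => |((-(2*t^3) + 3*t^2 - t)/12) * (e ^ 3 * deriv (deriv (deriv f)) (b + t * e))|) volume 0 1 := by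
    apply IntervalIntegrable.abs
    exact hi3.continuousOn_mul (by fun_prop)
  have hintM : IntervalIntegrable
      (fun t : ℝ => |(-(2*t^3) + 3*t^2 - t)/12| * (|e|^3 * ((1-t) * |deriv (deriv (deriv f)) b| + t * |deriv (deriv (deriv f)) a|))) volume 0 1 :=
    (by fun_prop : Continuous fun t : ℝ => |(-(2*t^3) + 3*t^2 - t)/12| * (|e|^3 * ((1-t) * |deriv (deriv (deriv f)) b| + t * |deriv (deriv (deriv f)) a|))).intervalIntegrable _ _
  have hmono : ∫ t in (0:ℝ)..1, |((-(2*t^3) + 3*t^2 - t)/12) * (e ^ 3 * deriv (deriv (deriv f)) (b + t * e))|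
      ≤ ∫ t in (0:ℝ)..1, |(-(2*t^3) + 3*t^2 - t)/12| * (|e|^3 * ((1-t) * |deriv (deriv (deriv f)) b| + t * |deriv (deriv (deriv f)) a|)) := by
    apply integral_mono_on zero_le_one hintprod hintM
    intro t ht
    have hp := hpre b hb a ha t ht
    rw [abs_mul, abs_mul, abs_pow]
    gcongr
    all_goals first | exact abs_nonneg _ | exact hp
  have heval : ∫ t in (0:ℝ)..1, |(-(2*t^3) + 3*t^2 - t)/12| * (|e|^3 * ((1-t) * |deriv (deriv (deriv f)) b| + t * |deriv (deriv (deriv f)) a|))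
      = |e|^3 * (|deriv (deriv (deriv f)) a| + |deriv (deriv (deriv f)) b|) / 384 :=
    co21_poly_int (|e|^3) _ _
  calc |e| * |∫ t in (0:ℝ)..1, ((-(2*t^3) + 3*t^2 - t)/12) * (e ^ 3 * deriv (deriv (deriv f)) (b + t * e))|
      ≤ |e| * (|e|^3 * (|deriv (deriv (deriv f)) a| + |deriv (deriv (deriv f)) b|) / 384) := by
        apply mul_le_mul_of_nonneg_left _ (abs_nonneg e)
        exact habs.trans (hmono.trans_eq heval)
    _ = (e ^ 4 / 384) * (|deriv (deriv (deriv f)) a| + |deriv (deriv (deriv f)) b|) := by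
        have h4 : |e| * |e|^3 = e ^ 4 := by
          have h5 : |e| ^ 4 = e ^ 4 := by
            rw [← abs_pow]; exact abs_of_nonneg (by positivity)
          rw [← h5]; ring
        rw [← h4]
        ring
end

section
/- Let A ⊆ ℝ be open and invex with respect to η, a,b ∈ A with η(a,b) ≠ 0, f : A → ℝ three times differentiable, q > 1, 1/p + 1/q = 1, and |f'''|^q preinvex on A. Then |∫_b^{b+η(a,b)} f(x)dx - η(a,b)·(f(b)+f(b+η(a,b)))/2 - (η(a,b)²/12)·(f'(b)-f'(b+η(a,b)))| ≤ (η(a,b)^4/(24·6^(1/q)))·(1/((p+1)(p+3)))^(1/p)·(|f'''(a)|^q + |f'''(b)|^q)^(1/q). -/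
open MeasureTheory intervalIntegral Set Real

lemma teo22_cont_ker (p : ℝ) (hp0 : 0 < p) :
    Continuous (fun t : ℝ => t*(1-t)*|2*t-1|^p) := by
  apply Continuous.mul (by continuity)
  exact Continuous.rpow_const (by continuity) (fun t => Or.inr hp0.le)

lemma teo22_Jval {p : ℝ} (hp : 1 < p) :
    ∫ t in (0:ℝ)..1, t*(1-t)*|2*t-1|^p = 1/(2*((p+1)*(p+3))) := by
  have hp0 : 0 < p := lt_trans one_pos hp
  have hc := teo22_cont_ker p hp0
  have hp1 : p + 1 ≠ 0 := by linarith
  have hp3 : p + 3 ≠ 0 := by linarith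
  have h2 : ∫ t in (1/2:ℝ)..1, t*(1-t)*|2*t-1|^p
      = 1/(4*((p+1)*(p+3))) := by
    have hder : ∀ t ∈ uIcc (1/2:ℝ) 1,
        HasDerivAt (fun t : ℝ => ((2*t-1)^(p+1)/(p+1) - (2*t-1)^(p+3)/(p+3))/8)
          (t*(1-t)*|2*t-1|^p) t := by
      intro t ht
      rw [uIcc_of_le (by norm_num)] at ht
      have hs : (0:ℝ) ≤ 2*t-1 := by linarith [ht.1]
      have hlin : HasDerivAt (fun t : ℝ => 2*t-1) 2 t := by
        simpa using ((hasDerivAt_id t).const_mul (2:ℝ)).sub_const 1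
      have d1 : HasDerivAt (fun t : ℝ => (2*t-1)^(p+1)) ((p+1)*(2*t-1)^p * 2) t := by
        have := (Real.hasDerivAt_rpow_const (x := 2*t-1) (p := p+1)
          (Or.inr (by linarith))).comp t hlin
        simpa [add_sub_cancel_right, Function.comp_def] using this
      have d2 : HasDerivAt (fun t : ℝ => (2*t-1)^(p+3)) ((p+3)*(2*t-1)^(p+2) * 2) t := by
        have := (Real.hasDerivAt_rpow_const (x := 2*t-1) (p := p+3)
          (Or.inr (by linarith))).comp t hlin
        have e : p + 3 - 1 = p + 2 := by ring
        simpa [e, Function.comp_def] using this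
      have := ((d1.div_const (p+1)).sub (d2.div_const (p+3))).div_const 8
      refine this.congr_deriv ?_
      have hsq : (2*t-1)^(p+2) = (2*t-1)^p * (2*t-1)^2 := by
        rcases hs.eq_or_lt with h0 | h0
        · rw [← h0]
          rw [Real.zero_rpow (by linarith), Real.zero_rpow hp0.ne']
          ring
        · rw [show p + 2 = p + (2:ℕ) by norm_num, Real.rpow_add h0, Real.rpow_natCast]
      rw [abs_of_nonneg hs, hsq]
      field_simp
      ring
    rw [integral_eq_sub_of_hasDerivAt hder
      ((hc.continuousOn).intervalIntegrable)]
    norm_num [Real.zero_rpow hp1, Real.zero_rpow hp3]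
    field_simp
    ring
  have h1 : ∫ t in (0:ℝ)..(1/2), t*(1-t)*|2*t-1|^p
      = 1/(4*((p+1)*(p+3))) := by
    have hder : ∀ t ∈ uIcc (0:ℝ) (1/2),
        HasDerivAt (fun t : ℝ => ((1-2*t)^(p+3)/(p+3) - (1-2*t)^(p+1)/(p+1))/8)
          (t*(1-t)*|2*t-1|^p) t := by
      intro t ht
      rw [uIcc_of_le (by norm_num)] at ht
      have hs : (0:ℝ) ≤ 1-2*t := by linarith [ht.2]
      have hlin : HasDerivAt (fun t : ℝ => 1-2*t) (-2) t := by
        simpa using ((hasDerivAt_id t).const_mul (2:ℝ)).const_sub 1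
      have d1 : HasDerivAt (fun t : ℝ => (1-2*t)^(p+1)) ((p+1)*(1-2*t)^p * (-2)) t := by
        have := (Real.hasDerivAt_rpow_const (x := 1-2*t) (p := p+1)
          (Or.inr (by linarith))).comp t hlin
        simpa [add_sub_cancel_right, Function.comp_def] using this
      have d2 : HasDerivAt (fun t : ℝ => (1-2*t)^(p+3)) ((p+3)*(1-2*t)^(p+2) * (-2)) t := by
        have := (Real.hasDerivAt_rpow_const (x := 1-2*t) (p := p+3)
          (Or.inr (by linarith))).comp t hlin
        have e : p + 3 - 1 = p + 2 := by ring
        simpa [e, Function.comp_def] using this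
      have := ((d2.div_const (p+3)).sub (d1.div_const (p+1))).div_const 8
      refine this.congr_deriv ?_
      have hsq : (1-2*t)^(p+2) = (1-2*t)^p * (1-2*t)^2 := by
        rcases hs.eq_or_lt with h0 | h0
        · rw [← h0]
          rw [Real.zero_rpow (by linarith), Real.zero_rpow hp0.ne']
          ring
        · rw [show p + 2 = p + (2:ℕ) by norm_num, Real.rpow_add h0, Real.rpow_natCast]
      have habs : |2*t-1| = 1-2*t := by
        rw [abs_of_nonpos (by linarith)]; ring
      rw [habs, hsq]
      field_simp
      ring
    rw [integral_eq_sub_of_hasDerivAt hder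
      ((hc.continuousOn).intervalIntegrable)]
    norm_num [Real.zero_rpow hp1, Real.zero_rpow hp3]
    field_simp
    ring
  rw [← intervalIntegral.integral_add_adjacent_intervals
    (hc.intervalIntegrable 0 (1/2)) (hc.intervalIntegrable (1/2) 1), h1, h2]
  field_simp
  ring

lemma teo22_Wval (C D : ℝ) :
    ∫ t in (0:ℝ)..1, t*(1-t)*((1-t)*C + t*D) = (C+D)/12 := by
  have hder : ∀ t ∈ uIcc (0:ℝ) 1,
      HasDerivAt (fun t : ℝ => C*(t^2/2 - 2*t^3/3 + t^4/4) + D*(t^3/3 - t^4/4))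
        (t*(1-t)*((1-t)*C + t*D)) t := by
    intro t _
    have h2 : HasDerivAt (fun t:ℝ => t^2) (2*t) t := by simpa using hasDerivAt_pow 2 t
    have h3 : HasDerivAt (fun t:ℝ => t^3) (3*t^2) t := by simpa using hasDerivAt_pow 3 t
    have h4 : HasDerivAt (fun t:ℝ => t^4) (4*t^3) t := by simpa using hasDerivAt_pow 4 t
    have := ((((h2.div_const 2).sub ((h3.const_mul (2:ℝ)).div_const 3)).add
      (h4.div_const 4)).const_mul C).add
      (((h3.div_const 3).sub (h4.div_const 4)).const_mul D)
    refine this.congr_deriv ?_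
    ring
  rw [integral_eq_sub_of_hasDerivAt hder (by apply Continuous.intervalIntegrable; continuity)]
  norm_num
  ring

set_option maxHeartbeats 2000000 in
lemma teo22_holder (F : ℝ → ℝ) (p q Av Bv : ℝ) (hp1 : 1 < p) (hq : 1 < q)
    (hpq : 1/p + 1/q = 1) (hAv0 : 0 ≤ Av) (hBv0 : 0 ≤ Bv)
    (hFInt : IntervalIntegrable F volume 0 1)
    (hFbound : ∀ t ∈ Icc (0:ℝ) 1, |F t| ^ q ≤ (1-t)*Av + t*Bv) :
    (∫ t in (0:ℝ)..1, |((-2*t^3+3*t^2-t)/12) * F t|)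
      ≤ (1/(24 * (6:ℝ)^(1/q))) * (1/((p+1)*(p+3)))^(1/p) * (Av+Bv)^(1/q) := by
  have hq0 : 0 < q := lt_trans one_pos hq
  have hp0 : 0 < p := lt_trans one_pos hp1
  have hq1 : (0:ℝ) < 1/q := by positivity
  have hp1' : (0:ℝ) < 1/p := by positivity
  haveI : IsFiniteMeasure (volume.restrict (Ioc (0:ℝ) 1)) := by
    constructor
    rw [Measure.restrict_apply_univ]
    simp [Real.volume_Ioc]
  have hFmeas : AEStronglyMeasurable F (volume.restrict (Ioc (0:ℝ) 1)) :=
    hFInt.1.aestronglyMeasurable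
  set u : ℝ → ℝ := fun t => (t*(1-t))^(1/p) * |2*t-1| with hu
  set v : ℝ → ℝ := fun t => (t*(1-t))^(1/q) * ‖F t‖ with hv
  have hnn : ∀ t ∈ Ioc (0:ℝ) 1, 0 ≤ t*(1-t) := fun t ht => by nlinarith [ht.1, ht.2]
  have hle1 : ∀ t ∈ Ioc (0:ℝ) 1, t*(1-t) ≤ 1 := fun t ht => by nlinarith [ht.1, ht.2]
  have hu_cont : Continuous u := by
    apply Continuous.mul
    · exact Continuous.rpow_const (by continuity) (fun x => Or.inr (by positivity))
    · continuity
  have hu_nonneg : ∀ t ∈ Ioc (0:ℝ) 1, 0 ≤ u t := fun t ht =>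
    mul_nonneg (Real.rpow_nonneg (hnn t ht) _) (abs_nonneg _)
  have hv_nonneg : ∀ t ∈ Ioc (0:ℝ) 1, 0 ≤ v t := fun t ht =>
    mul_nonneg (Real.rpow_nonneg (hnn t ht) _) (norm_nonneg _)
  have hFabs : ∀ t ∈ Icc (0:ℝ) 1, |F t| ≤ (Av+Bv)^(1/q) := by
    intro t ht
    have h1 : |F t| = (|F t|^q)^(1/q) := by
      rw [one_div, Real.rpow_rpow_inv (abs_nonneg _) hq0.ne']
    rw [h1]
    apply Real.rpow_le_rpow (Real.rpow_nonneg (abs_nonneg _) _) ?_ (le_of_lt hq1)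
    calc |F t|^q ≤ (1-t)*Av + t*Bv := hFbound t ht
      _ ≤ Av + Bv := by nlinarith [ht.1, ht.2]
  have hu_mem : MemLp u (ENNReal.ofReal p) (volume.restrict (Ioc (0:ℝ) 1)) := by
    apply MemLp.of_bound hu_cont.aestronglyMeasurable 1
    refine (ae_restrict_iff' measurableSet_Ioc).2 (ae_of_all _ fun t ht => ?_)
    rw [Real.norm_eq_abs, abs_of_nonneg (hu_nonneg t ht)]
    have h2 : |2*t-1| ≤ 1 := abs_le.mpr ⟨by linarith [ht.1], by linarith [ht.2]⟩
    calc (t*(1-t))^(1/p) * |2*t-1| ≤ 1 * 1 :=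
          mul_le_mul (Real.rpow_le_one (hnn t ht) (hle1 t ht) hp1'.le) h2 (abs_nonneg _)
            zero_le_one
      _ = 1 := mul_one 1
  have hv_meas : AEStronglyMeasurable v (volume.restrict (Ioc (0:ℝ) 1)) := by
    apply AEStronglyMeasurable.mul ?_ hFmeas.norm
    exact (Continuous.rpow_const (by continuity) (fun x => Or.inr hq1.le)).aestronglyMeasurable
  have hv_mem : MemLp v (ENNReal.ofReal q) (volume.restrict (Ioc (0:ℝ) 1)) := by
    apply MemLp.of_bound hv_meas ((Av+Bv)^(1/q))
    refine (ae_restrict_iff' measurableSet_Ioc).2 (ae_of_all _ fun t ht => ?_)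
    rw [Real.norm_eq_abs, abs_of_nonneg (hv_nonneg t ht)]
    calc (t*(1-t))^(1/q) * ‖F t‖ ≤ 1 * ((Av+Bv)^(1/q)) := by
          apply mul_le_mul (Real.rpow_le_one (hnn t ht) (hle1 t ht) hq1.le) ?_ (norm_nonneg _)
            zero_le_one
          rw [Real.norm_eq_abs]
          exact hFabs t ⟨ht.1.le, ht.2⟩
      _ = (Av+Bv)^(1/q) := one_mul _
  have holder := integral_mul_le_Lp_mul_Lq_of_nonneg
    (μ := volume.restrict (Ioc (0:ℝ) 1))
    (Real.holderConjugate_iff.mpr ⟨hp1, by rw [← one_div, ← one_div]; exact hpq⟩ : Real.HolderConjugate p q)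
    ((ae_restrict_iff' measurableSet_Ioc).2 (ae_of_all _ hu_nonneg))
    ((ae_restrict_iff' measurableSet_Ioc).2 (ae_of_all _ hv_nonneg))
    hu_mem hv_mem
  have hup : (∫ t in Ioc (0:ℝ) 1, u t ^ p)
      = 1/(2*((p+1)*(p+3))) := by
    have e1 : ∀ t ∈ Ioc (0:ℝ) 1, u t ^ p = t*(1-t)*|2*t-1|^p := by
      intro t ht
      show ((t*(1-t))^(1/p) * |2*t-1|)^p = _
      rw [Real.mul_rpow (Real.rpow_nonneg (hnn t ht) _) (abs_nonneg _), one_div,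
        Real.rpow_inv_rpow (hnn t ht) hp0.ne']
    calc (∫ t in Ioc (0:ℝ) 1, u t ^ p)
        = ∫ t in Ioc (0:ℝ) 1, t*(1-t)*|2*t-1|^p := setIntegral_congr_fun measurableSet_Ioc e1
      _ = ∫ t in (0:ℝ)..1, t*(1-t)*|2*t-1|^p := (intervalIntegral.integral_of_le zero_le_one).symm
      _ = 1/(2*((p+1)*(p+3))) := teo22_Jval hp1
  have hvq : (∫ t in Ioc (0:ℝ) 1, v t ^ q) ≤ (Av+Bv)/12 := by
    have e1 : ∀ t ∈ Ioc (0:ℝ) 1, v t ^ q = t*(1-t)*|F t|^q := by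
      intro t ht
      show ((t*(1-t))^(1/q) * ‖F t‖)^q = _
      rw [Real.mul_rpow (Real.rpow_nonneg (hnn t ht) _) (norm_nonneg _), one_div,
        Real.rpow_inv_rpow (hnn t ht) hq0.ne', Real.norm_eq_abs]
    have hInt1 : IntegrableOn (fun t => t*(1-t)*|F t|^q) (Ioc (0:ℝ) 1) volume := by
      apply Integrable.mono' (g := fun _ => Av + Bv) (integrable_const _)
      · apply AEStronglyMeasurable.mul
          ((by continuity : Continuous fun t : ℝ => t*(1-t)).aestronglyMeasurable)
        have h1 : AEMeasurable (fun t => ‖F t‖ ^ q) (volume.restrict (Ioc (0:ℝ) 1)) :=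
          hFmeas.norm.aemeasurable.pow aemeasurable_const
        have h2 : AEMeasurable (fun t => |F t| ^ q) (volume.restrict (Ioc (0:ℝ) 1)) := by
          simpa [Real.norm_eq_abs] using h1
        exact h2.aestronglyMeasurable
      · refine (ae_restrict_iff' measurableSet_Ioc).2 (ae_of_all _ fun t ht => ?_)
        have h1 := hnn t ht
        have h2 := hle1 t ht
        have h3 : (0:ℝ) ≤ |F t|^q := Real.rpow_nonneg (abs_nonneg _) _
        have h4 := hFbound t ⟨ht.1.le, ht.2⟩
        rw [Real.norm_eq_abs, abs_of_nonneg (mul_nonneg h1 h3)]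
        nlinarith [ht.1, ht.2]
    have hInt2 : IntegrableOn (fun t => t*(1-t)*((1-t)*Av + t*Bv)) (Ioc (0:ℝ) 1) volume :=
      (by continuity : Continuous fun t : ℝ => t*(1-t)*((1-t)*Av + t*Bv)).integrableOn_Ioc
    calc (∫ t in Ioc (0:ℝ) 1, v t ^ q)
        = ∫ t in Ioc (0:ℝ) 1, t*(1-t)*|F t|^q := setIntegral_congr_fun measurableSet_Ioc e1
      _ ≤ ∫ t in Ioc (0:ℝ) 1, t*(1-t)*((1-t)*Av + t*Bv) := by
          apply setIntegral_mono_on hInt1 hInt2 measurableSet_Ioc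
          intro t ht
          exact mul_le_mul_of_nonneg_left (hFbound t ⟨ht.1.le, ht.2⟩) (hnn t ht)
      _ = ∫ t in (0:ℝ)..1, t*(1-t)*((1-t)*Av + t*Bv) :=
          (intervalIntegral.integral_of_le zero_le_one).symm
      _ = (Av+Bv)/12 := teo22_Wval Av Bv
  -- pointwise identity for the kernel
  have hker : ∀ t ∈ Ioc (0:ℝ) 1,
      |((-2*t^3+3*t^2-t)/12) * F t| = (1/12) * (u t * v t) := by
    intro t ht
    have h1 := hnn t ht
    have hx : (t*(1-t))^(1/p) * (t*(1-t))^(1/q) = t*(1-t) := by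
      rcases h1.eq_or_lt with h0 | h0
      · rw [← h0, Real.zero_rpow (ne_of_gt hp1'), Real.zero_rpow (ne_of_gt hq1), mul_zero]
      · rw [← Real.rpow_add h0, hpq, Real.rpow_one]
    have hKt : ((-2*t^3+3*t^2-t)/12) = t*(1-t)*(2*t-1)/12 := by ring
    rw [hKt, abs_mul, abs_div, abs_mul, abs_of_nonneg h1, show |(12:ℝ)| = 12 by norm_num]
    show t*(1-t) * |2*t-1| / 12 * |F t|
      = 1/12 * (((t*(1-t))^(1/p) * |2*t-1|) * ((t*(1-t))^(1/q) * ‖F t‖))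
    rw [Real.norm_eq_abs]
    calc t*(1-t) * |2*t-1| / 12 * |F t|
        = 1/12 * (((t*(1-t))^(1/p) * (t*(1-t))^(1/q)) * (|2*t-1| * |F t|)) := by
          rw [hx]; ring
      _ = 1/12 * (((t*(1-t))^(1/p) * |2*t-1|) * ((t*(1-t))^(1/q) * |F t|)) := by ring
  -- assemble
  have hvq0 : 0 ≤ ∫ t in Ioc (0:ℝ) 1, v t ^ q := by
    apply MeasureTheory.integral_nonneg_of_ae
    refine (ae_restrict_iff' measurableSet_Ioc).2 (ae_of_all _ fun t ht => ?_)
    exact Real.rpow_nonneg (hv_nonneg t ht) _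
  have main : (∫ t in (0:ℝ)..1, |((-2*t^3+3*t^2-t)/12) * F t|)
      ≤ (1/12) * ((1/(2*((p+1)*(p+3))))^(1/p) * ((Av+Bv)/12)^(1/q)) := by
    calc (∫ t in (0:ℝ)..1, |((-2*t^3+3*t^2-t)/12) * F t|)
        = ∫ t in Ioc (0:ℝ) 1, |((-2*t^3+3*t^2-t)/12) * F t| :=
          intervalIntegral.integral_of_le zero_le_one
      _ = ∫ t in Ioc (0:ℝ) 1, (1/12) * (u t * v t) :=
          setIntegral_congr_fun measurableSet_Ioc hker
      _ = (1/12) * ∫ t in Ioc (0:ℝ) 1, u t * v t := by rw [MeasureTheory.integral_const_mul]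
      _ ≤ (1/12) * ((∫ t in Ioc (0:ℝ) 1, u t ^ p)^(1/p)
            * (∫ t in Ioc (0:ℝ) 1, v t ^ q)^(1/q)) := by
          apply mul_le_mul_of_nonneg_left holder (by norm_num)
      _ ≤ (1/12) * ((1/(2*((p+1)*(p+3))))^(1/p) * ((Av+Bv)/12)^(1/q)) := by
          rw [hup]
          apply mul_le_mul_of_nonneg_left ?_ (by norm_num)
          apply mul_le_mul_of_nonneg_left ?_ (Real.rpow_nonneg (by positivity) _)
          exact Real.rpow_le_rpow hvq0 hvq hq1.le
  refine main.trans (le_of_eq ?_)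
  -- final constant computation
  have hx0 : (0:ℝ) < (p+1)*(p+3) := by positivity
  have hS : (0:ℝ) ≤ Av + Bv := by linarith
  rw [show (1/(2*((p+1)*(p+3))) : ℝ) = (1/2)*(1/((p+1)*(p+3))) from (one_div_mul_one_div _ _).symm,
    Real.mul_rpow (by norm_num) (by positivity),
    show ((Av+Bv)/12 : ℝ) = (1/2)*((1/6)*(Av+Bv)) by ring,
    Real.mul_rpow (by norm_num) (mul_nonneg (by norm_num) hS),
    Real.mul_rpow (by norm_num) hS]
  have h2 : ((1:ℝ)/2)^(1/p) * ((1:ℝ)/2)^(1/q) = 1/2 := by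
    rw [← Real.rpow_add (by norm_num), hpq, Real.rpow_one]
  have h6 : ((1:ℝ)/6)^(1/q) = 1/((6:ℝ)^(1/q)) := by
    rw [Real.div_rpow (by norm_num) (by norm_num), Real.one_rpow]
  have h60 : (0:ℝ) < (6:ℝ)^(1/q) := Real.rpow_pos_of_pos (by norm_num) _
  calc (1:ℝ)/12 * ((1/2)^(1/p) * (1/((p+1)*(p+3)))^(1/p)
        * ((1/2)^(1/q) * ((1/6)^(1/q) * (Av+Bv)^(1/q))))
      = ((1/2)^(1/p) * (1/2)^(1/q)) * ((1/6)^(1/q)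
          * ((1:ℝ)/12 * ((1/((p+1)*(p+3)))^(1/p) * (Av+Bv)^(1/q)))) := by ring
    _ = (1/(24 * (6:ℝ)^(1/q))) * (1/((p+1)*(p+3)))^(1/p) * (Av+Bv)^(1/q) := by
        rw [h2, h6, show (1/(24 * (6:ℝ)^(1/q)) : ℝ) = (1/24) * (1/(6:ℝ)^(1/q))
          from (one_div_mul_one_div _ _).symm]
        ring


set_option maxHeartbeats 1000000 in
lemma teo22_key (A : Set ℝ) (f : ℝ → ℝ) (b e : ℝ) (he : e ≠ 0)
    (hmem : ∀ t ∈ Icc (0:ℝ) 1, b + t*e ∈ A)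
    (hf1 : ∀ x ∈ A, DifferentiableAt ℝ f x)
    (hf2 : ∀ x ∈ A, DifferentiableAt ℝ (deriv f) x)
    (hf3 : ∀ x ∈ A, DifferentiableAt ℝ (deriv (deriv f)) x)
    (hint : IntervalIntegrable (deriv (deriv (deriv f))) volume b (b + e)) :
    (∫ x in b..(b+e), f x) - e * (f b + f (b+e)) / 2
      - (e^2/12) * (deriv f b - deriv f (b+e))
    = e^4 * ∫ t in (0:ℝ)..1,
        ((-2*t^3+3*t^2-t)/12) * deriv (deriv (deriv f)) (b + t*e) := by
  have huIcc : uIcc (0:ℝ) 1 = Icc 0 1 := uIcc_of_le zero_le_one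
  have hld : ∀ t : ℝ, HasDerivAt (fun s : ℝ => b + s*e) e t := fun t => by
    simpa using ((hasDerivAt_id t).mul_const e).const_add b
  have hlc : Continuous (fun s : ℝ => b + s*e) := by continuity
  -- derivatives along the path
  have hg' : ∀ t ∈ uIcc (0:ℝ) 1,
      HasDerivAt (fun t => f (b + t*e)) (e * deriv f (b + t*e)) t := by
    intro t ht
    rw [huIcc] at ht
    have h := ((hf1 _ (hmem t ht)).hasDerivAt).comp t (hld t)
    simp only [Function.comp_def] at h
    refine h.congr_deriv ?_
    ring
  have hg1' : ∀ t ∈ uIcc (0:ℝ) 1,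
      HasDerivAt (fun t => e * deriv f (b + t*e)) (e^2 * deriv (deriv f) (b + t*e)) t := by
    intro t ht
    rw [huIcc] at ht
    have h := (((hf2 _ (hmem t ht)).hasDerivAt).comp t (hld t)).const_mul e
    simp only [Function.comp_def] at h
    refine h.congr_deriv ?_
    ring
  have hg2' : ∀ t ∈ uIcc (0:ℝ) 1,
      HasDerivAt (fun t => e^2 * deriv (deriv f) (b + t*e))
        (e^3 * deriv (deriv (deriv f)) (b + t*e)) t := by
    intro t ht
    rw [huIcc] at ht
    have h := (((hf3 _ (hmem t ht)).hasDerivAt).comp t (hld t)).const_mul (e^2)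
    simp only [Function.comp_def] at h
    refine h.congr_deriv ?_
    ring
  -- continuity along the path
  have hc0 : ContinuousOn (fun t => f (b + t*e)) (uIcc (0:ℝ) 1) := by
    rw [huIcc]
    intro t ht
    exact (ContinuousAt.comp (g := f) (f := fun s : ℝ => b + s*e)
      (hf1 _ (hmem t ht)).continuousAt hlc.continuousAt).continuousWithinAt
  have hc1 : ContinuousOn (fun t => e * deriv f (b + t*e)) (uIcc (0:ℝ) 1) := by
    rw [huIcc]
    intro t ht
    exact ((ContinuousAt.comp (g := deriv f) (f := fun s : ℝ => b + s*e)
      (hf2 _ (hmem t ht)).continuousAt hlc.continuousAt).const_smul e).continuousWithinAt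
  have hc2 : ContinuousOn (fun t => e^2 * deriv (deriv f) (b + t*e)) (uIcc (0:ℝ) 1) := by
    rw [huIcc]
    intro t ht
    exact ((ContinuousAt.comp (g := deriv (deriv f)) (f := fun s : ℝ => b + s*e)
      (hf3 _ (hmem t ht)).continuousAt hlc.continuousAt).const_smul (e^2)).continuousWithinAt
  have hg0Int : IntervalIntegrable (fun t => f (b + t*e)) volume 0 1 := hc0.intervalIntegrable
  have hg1Int : IntervalIntegrable (fun t => e * deriv f (b + t*e)) volume 0 1 :=
    hc1.intervalIntegrable
  have hg2Int : IntervalIntegrable (fun t => e^2 * deriv (deriv f) (b + t*e)) volume 0 1 :=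
    hc2.intervalIntegrable
  have hFInt : IntervalIntegrable (fun t => deriv (deriv (deriv f)) (b + t*e)) volume 0 1 := by
    have h1 := (hint.comp_add_left b).comp_mul_left (c := e)
    simp only [sub_self, zero_div, add_sub_cancel_left, div_self he] at h1
    have : (fun x => deriv (deriv (deriv f)) (b + e*x))
        = fun t => deriv (deriv (deriv f)) (b + t*e) := by
      funext x; rw [mul_comm]
    rwa [this] at h1
  have hg3Int : IntervalIntegrable (fun t => e^3 * deriv (deriv (deriv f)) (b + t*e))
      volume 0 1 := hFInt.const_mul _
  -- integration by parts, three times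
  have ibp1 := integral_mul_deriv_eq_deriv_mul (a := 0) (b := 1)
    (u := fun t : ℝ => (-2*t^3+3*t^2-t)/12) (u' := fun t : ℝ => (-6*t^2+6*t-1)/12)
    (v := fun t => e^2 * deriv (deriv f) (b + t*e))
    (v' := fun t => e^3 * deriv (deriv (deriv f)) (b + t*e))
    (fun t _ => by
      have h2 : HasDerivAt (fun t:ℝ => t^2) (2*t) t := by simpa using hasDerivAt_pow 2 t
      have h3 : HasDerivAt (fun t:ℝ => t^3) (3*t^2) t := by simpa using hasDerivAt_pow 3 t
      have h := (((h3.const_mul (-2:ℝ)).add (h2.const_mul 3)).sub (hasDerivAt_id t)).div_const 12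
      refine h.congr_deriv ?_
      beta_reduce
      try simp only [id_eq]
      ring)
    hg2' (by apply Continuous.intervalIntegrable; continuity) hg3Int
  have ibp2 := integral_mul_deriv_eq_deriv_mul (a := 0) (b := 1)
    (u := fun t : ℝ => (-6*t^2+6*t-1)/12) (u' := fun t : ℝ => (1-2*t)/2)
    (v := fun t => e * deriv f (b + t*e))
    (v' := fun t => e^2 * deriv (deriv f) (b + t*e))
    (fun t _ => by
      have h2 : HasDerivAt (fun t:ℝ => t^2) (2*t) t := by simpa using hasDerivAt_pow 2 t
      have h := (((h2.const_mul (-6:ℝ)).add ((hasDerivAt_id t).const_mul 6)).sub_const 1).div_const 12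
      refine h.congr_deriv ?_
      beta_reduce
      try simp only [id_eq]
      ring)
    hg1' (by apply Continuous.intervalIntegrable; continuity) hg2Int
  have ibp3 := integral_mul_deriv_eq_deriv_mul (a := 0) (b := 1)
    (u := fun t : ℝ => (1-2*t)/2) (u' := fun t : ℝ => (-1 : ℝ))
    (v := fun t => f (b + t*e))
    (v' := fun t => e * deriv f (b + t*e))
    (fun t _ => by
      have h := (((hasDerivAt_id t).const_mul (2:ℝ)).const_sub 1).div_const 2
      refine h.congr_deriv ?_
      beta_reduce
      try simp only [id_eq]
      ring)
    hg' (by apply Continuous.intervalIntegrable; continuity) hg1Int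
  -- substitution
  have hsub : (∫ x in b..(b+e), f x) = e * ∫ t in (0:ℝ)..1, f (b + t*e) := by
    have himg : ContinuousOn f ((fun t => b + t*e) '' uIcc (0:ℝ) 1) := by
      have hfA : ContinuousOn f A := fun x hx => (hf1 x hx).continuousAt.continuousWithinAt
      refine hfA.mono ?_
      rintro x ⟨t, ht, rfl⟩
      exact hmem t (huIcc ▸ ht)
    have h := integral_comp_smul_deriv'' (a := (0:ℝ)) (b := 1)
      (f := fun t => b + t*e) (f' := fun _ => e) (g := f)
      hlc.continuousOn (fun t _ => (hld t).hasDerivWithinAt) continuousOn_const himg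
    simp only [Function.comp_def, smul_eq_mul] at h
    norm_num at h
    rw [← h]
  have pull : (∫ t in (0:ℝ)..1,
        ((-2*t^3+3*t^2-t)/12) * (e^3 * deriv (deriv (deriv f)) (b + t*e)))
      = e^3 * ∫ t in (0:ℝ)..1,
        ((-2*t^3+3*t^2-t)/12) * deriv (deriv (deriv f)) (b + t*e) := by
    rw [← intervalIntegral.integral_const_mul]
    apply intervalIntegral.integral_congr
    intro t _
    ring
  norm_num at ibp1 ibp2 ibp3 pull ⊢
  linear_combination hsub + e * pull - e * ibp1 + e * ibp2 - e * ibp3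

theorem teo22 (A : Set ℝ) (hA : IsOpen A) (η : ℝ → ℝ → ℝ)
    (hinvex : ∀ u ∈ A, ∀ v ∈ A, ∀ t ∈ Icc (0:ℝ) 1, u + t * η v u ∈ A)
    (a b : ℝ) (ha : a ∈ A) (hb : b ∈ A) (hη : η a b ≠ 0) (f : ℝ → ℝ)
    (hf1 : ∀ x ∈ A, DifferentiableAt ℝ f x)
    (hf2 : ∀ x ∈ A, DifferentiableAt ℝ (deriv f) x)
    (hf3 : ∀ x ∈ A, DifferentiableAt ℝ (deriv (deriv f)) x)
    (hint : IntervalIntegrable (deriv (deriv (deriv f))) volume b (b + η a b))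
    (p q : ℝ) (hq : 1 < q) (hpq : 1 / p + 1 / q = 1)
    (hpre : ∀ u ∈ A, ∀ v ∈ A, ∀ t ∈ Icc (0:ℝ) 1,
      |deriv (deriv (deriv f)) (u + t * η v u)| ^ q
        ≤ (1 - t) * |deriv (deriv (deriv f)) u| ^ q
          + t * |deriv (deriv (deriv f)) v| ^ q) :
    |(∫ x in b..(b + η a b), f x) - η a b * (f b + f (b + η a b)) / 2
      - ((η a b) ^ 2 / 12) * (deriv f b - deriv f (b + η a b))|
    ≤ ((η a b) ^ 4 / (24 * (6:ℝ) ^ (1 / q))) *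
        (1 / ((p + 1) * (p + 3))) ^ (1 / p) *
        (|deriv (deriv (deriv f)) a| ^ q + |deriv (deriv (deriv f)) b| ^ q)
          ^ (1 / q) := by
  have hq0 : 0 < q := lt_trans one_pos hq
  have hp0 : 0 < p := by
    by_contra hc
    push_neg at hc
    have h1 : 1/p ≤ 0 := one_div_nonpos.mpr hc
    have h2 : (0:ℝ) < 1/q := by positivity
    have h3 : 1/q < 1 := by rw [div_lt_one hq0]; exact hq
    linarith
  have hp1 : 1 < p := by
    have h2 : (0:ℝ) < 1/q := by positivity
    have h3 : 1/p < 1 := by linarith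
    rwa [div_lt_one hp0] at h3
  have hmem : ∀ t ∈ Icc (0:ℝ) 1, b + t * η a b ∈ A := fun t ht => hinvex b hb a ha t ht
  have key := teo22_key A f b (η a b) hη hmem hf1 hf2 hf3 hint
  have hFInt : IntervalIntegrable (fun t => deriv (deriv (deriv f)) (b + t * η a b))
      volume 0 1 := by
    have h1 := (hint.comp_add_left b).comp_mul_left (c := η a b)
    simp only [sub_self, zero_div, add_sub_cancel_left, div_self hη] at h1
    have h2 : (fun x => deriv (deriv (deriv f)) (b + η a b * x))
        = fun t => deriv (deriv (deriv f)) (b + t * η a b) := by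
      funext x; rw [mul_comm]
    rwa [h2] at h1
  have hFbound : ∀ t ∈ Icc (0:ℝ) 1,
      |deriv (deriv (deriv f)) (b + t * η a b)| ^ q
        ≤ (1-t) * |deriv (deriv (deriv f)) b| ^ q
          + t * |deriv (deriv (deriv f)) a| ^ q := fun t ht => hpre b hb a ha t ht
  have hold := teo22_holder (fun t => deriv (deriv (deriv f)) (b + t * η a b)) p q
    (|deriv (deriv (deriv f)) b| ^ q) (|deriv (deriv (deriv f)) a| ^ q) hp1 hq hpq
    (Real.rpow_nonneg (abs_nonneg _) _) (Real.rpow_nonneg (abs_nonneg _) _) hFInt hFbound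
  rw [key]
  have h4 : (0:ℝ) ≤ (η a b)^4 := by positivity
  calc |(η a b)^4 * ∫ t in (0:ℝ)..1,
        ((-2*t^3+3*t^2-t)/12) * deriv (deriv (deriv f)) (b + t * η a b)|
      = (η a b)^4 * |∫ t in (0:ℝ)..1,
          ((-2*t^3+3*t^2-t)/12) * deriv (deriv (deriv f)) (b + t * η a b)| := by
        rw [abs_mul, abs_of_nonneg h4]
    _ ≤ (η a b)^4 * ∫ t in (0:ℝ)..1,
          |((-2*t^3+3*t^2-t)/12) * deriv (deriv (deriv f)) (b + t * η a b)| :=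
        mul_le_mul_of_nonneg_left (intervalIntegral.abs_integral_le_integral_abs zero_le_one) h4
    _ ≤ (η a b)^4 * ((1/(24 * (6:ℝ)^(1/q))) * (1/((p+1)*(p+3)))^(1/p)
          * (|deriv (deriv (deriv f)) b| ^ q + |deriv (deriv (deriv f)) a| ^ q)^(1/q)) :=
        mul_le_mul_of_nonneg_left hold h4
    _ = ((η a b) ^ 4 / (24 * (6:ℝ) ^ (1 / q))) *
        (1 / ((p + 1) * (p + 3))) ^ (1 / p) *
        (|deriv (deriv (deriv f)) a| ^ q + |deriv (deriv (deriv f)) b| ^ q) ^ (1 / q) := by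
        rw [add_comm (|deriv (deriv (deriv f)) b| ^ q) (|deriv (deriv (deriv f)) a| ^ q)]
        ring
end

section
/- Let A ⊆ ℝ be open and invex with respect to η, a,b ∈ A with η(a,b) ≠ 0, f : A → ℝ three times differentiable, q > 1, 1/p + 1/q = 1, and |f'''|^q preinvex on A. Then |∫_b^{b+η(a,b)} f(x)dx - η(a,b)·(f(b)+f(b+η(a,b)))/2 - (η(a,b)²/12)·(f'(b)-f'(b+η(a,b)))| ≤ (η(a,b)^4/96)·(√π)^(1/p)·(Γ(1+p)/Γ(3/2+p))^(1/p)·(1/(q+1))^(1/q)·(|f'''(a)|^q + |f'''(b)|^q)^(1/q). -/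
open MeasureTheory intervalIntegral Set Real
open Topology


lemma beta_eval {p : ℝ} (hp : 0 < p) :
    ∫ t in (0:ℝ)..1, (t*(1-t))^p
      = Real.sqrt π * (Real.Gamma (1+p) / Real.Gamma (3/2+p)) * (1/2:ℝ)^(2*p+1) := by
  have h1 : (0:ℝ) < 1 + p := by linarith
  have hbeta := Complex.Gamma_mul_Gamma_eq_betaIntegral (s := (1+p:ℝ)) (t := (1+p:ℝ))
    (by simpa using h1) (by simpa using h1)
  have hbi : Complex.betaIntegral (1+p:ℝ) (1+p:ℝ) = ((∫ t in (0:ℝ)..1, (t*(1-t))^p : ℝ) : ℂ) := by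
    rw [Complex.betaIntegral, ← intervalIntegral.integral_ofReal]
    refine intervalIntegral.integral_congr fun x hx => ?_
    rw [Set.uIcc_of_le (by norm_num : (0:ℝ) ≤ 1)] at hx
    have hx0 : (0:ℝ) ≤ x := hx.1
    have hx1 : (0:ℝ) ≤ 1 - x := by linarith [hx.2]
    have he : ((1+p:ℝ):ℂ) - 1 = (p:ℂ) := by push_cast; ring
    have h1x : (1:ℂ) - (x:ℂ) = ((1-x:ℝ):ℂ) := by push_cast; ring
    rw [he, h1x, Real.mul_rpow hx0 hx1, ← Complex.ofReal_cpow hx0, ← Complex.ofReal_cpow hx1]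
    push_cast; ring
  rw [hbi] at hbeta
  have hdup := Real.Gamma_mul_Gamma_add_half (1+p)
  have hG1 : 0 < Real.Gamma (1+p) := Real.Gamma_pos_of_pos h1
  have hG2 : 0 < Real.Gamma (2*(1+p)) := Real.Gamma_pos_of_pos (by linarith)
  have hG3 : 0 < Real.Gamma (1+p+1/2) := Real.Gamma_pos_of_pos (by linarith)
  have hreal : Real.Gamma (1+p) * Real.Gamma (1+p)
      = Real.Gamma (2*(1+p)) * ∫ t in (0:ℝ)..1, (t*(1-t))^p := by
    have h2 : ((1+p:ℝ):ℂ) + ((1+p:ℝ):ℂ) = ((2*(1+p):ℝ):ℂ) := by push_cast; ring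
    rw [h2, Complex.Gamma_ofReal, Complex.Gamma_ofReal] at hbeta
    exact_mod_cast hbeta
  have hpow : (1/2:ℝ)^(2*p+1) = (2:ℝ)^(1-2*(1+p)) := by
    rw [one_div, Real.inv_rpow (by norm_num), ← Real.rpow_neg (by norm_num)]
    ring_nf
  have h32 : Real.Gamma (3/2+p) = Real.Gamma (1+p+1/2) := by ring_nf
  rw [hpow, h32]
  have hI : ∫ t in (0:ℝ)..1, (t*(1-t))^p
      = Real.Gamma (1+p) * Real.Gamma (1+p) / Real.Gamma (2*(1+p)) := by
    rw [eq_div_iff hG2.ne', mul_comm]; linarith [hreal]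
  rw [hI]
  set g1 := Real.Gamma (1+p) with hg1
  set g2 := Real.Gamma (2*(1+p)) with hg2
  set g3 := Real.Gamma (1+p+1/2) with hg3
  set e := (2:ℝ)^(1-2*(1+p)) with he
  field_simp
  nlinarith [hdup, hG1, mul_pos hG1 hG1]

lemma abs_rpow_intble {q : ℝ} (hq : 0 < q) (c a b : ℝ) :
    IntervalIntegrable (fun t : ℝ => |c - t|^q) volume a b :=
  (Continuous.rpow_const (by continuity) (fun x => Or.inr hq.le)).intervalIntegrable a b

lemma I1_eval {q : ℝ} (hq : 0 < q) :
    ∫ t in (0:ℝ)..1, |1/2 - t|^q = (1/2:ℝ)^(q+1) * 2 / (q+1) := by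
  have hsplit : (∫ t in (0:ℝ)..(1/2:ℝ), |1/2 - t|^q) + (∫ t in (1/2:ℝ)..1, |1/2 - t|^q)
      = ∫ t in (0:ℝ)..1, |1/2 - t|^q :=
    intervalIntegral.integral_add_adjacent_intervals
      (abs_rpow_intble hq (1/2) 0 (1/2)) (abs_rpow_intble hq (1/2) (1/2) 1)
  have hx : ∫ x in (0:ℝ)..(1/2:ℝ), x^q = (1/2:ℝ)^(q+1) / (q+1) := by
    rw [integral_rpow (Or.inl (by linarith))]
    rw [Real.zero_rpow (by positivity)]
    ring
  have h1 : ∫ t in (0:ℝ)..(1/2:ℝ), |1/2 - t|^q = (1/2:ℝ)^(q+1) / (q+1) := by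
    have : ∫ t in (0:ℝ)..(1/2:ℝ), |1/2 - t|^q = ∫ t in (0:ℝ)..(1/2:ℝ), ((fun x => x^q) (1/2 - t)) := by
      refine intervalIntegral.integral_congr fun x hx => ?_
      rw [Set.uIcc_of_le (by norm_num : (0:ℝ) ≤ 1/2)] at hx
      simp only [abs_of_nonneg (by linarith [hx.2] : (0:ℝ) ≤ 1/2 - x)]
    rw [this, intervalIntegral.integral_comp_sub_left (fun x => x^q) (1/2)]
    norm_num [hx]
  have h2 : ∫ t in (1/2:ℝ)..1, |1/2 - t|^q = (1/2:ℝ)^(q+1) / (q+1) := by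
    have : ∫ t in (1/2:ℝ)..1, |1/2 - t|^q = ∫ t in (1/2:ℝ)..1, ((fun x => x^q) (t - 1/2)) := by
      refine intervalIntegral.integral_congr fun x hx => ?_
      rw [Set.uIcc_of_le (by norm_num : (1/2:ℝ) ≤ 1)] at hx
      simp only [abs_sub_comm, abs_of_nonneg (by linarith [hx.1] : (0:ℝ) ≤ x - 1/2)]
    rw [this, intervalIntegral.integral_comp_sub_right (fun x => x^q) (1/2)]
    norm_num [hx]
  rw [← hsplit, h1, h2]; ring

lemma I2_eval {q : ℝ} (hq : 0 < q) :
    ∫ t in (0:ℝ)..1, |1/2 - t|^q * t = (1/2:ℝ)^(q+1) / (q+1) := by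
  have hflip : ∫ t in (0:ℝ)..1, |1/2 - t|^q * t
      = ∫ t in (0:ℝ)..1, |1/2 - t|^q * (1 - t) := by
    have := intervalIntegral.integral_comp_sub_left (a := (0:ℝ)) (b := 1)
      (fun x => |1/2 - x|^q * x) (1)
    norm_num at this
    rw [← this]
    refine intervalIntegral.integral_congr fun x hx => ?_
    have : |1/2 - (1 - x)| = |1/2 - x| := by rw [abs_sub_comm]; ring_nf
    rw [this]
  have hintq := abs_rpow_intble hq (1/2) (0:ℝ) 1
  have hintt : IntervalIntegrable (fun t : ℝ => |1/2 - t|^q * t) volume 0 1 :=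
    hintq.mul_continuousOn (by fun_prop)
  have hint1t : IntervalIntegrable (fun t : ℝ => |1/2 - t|^q * (1 - t)) volume 0 1 :=
    hintq.mul_continuousOn (by fun_prop)
  have hsum : (∫ t in (0:ℝ)..1, |1/2 - t|^q * t) + ∫ t in (0:ℝ)..1, |1/2 - t|^q * (1 - t)
      = ∫ t in (0:ℝ)..1, |1/2 - t|^q := by
    rw [← intervalIntegral.integral_add hintt hint1t]
    refine intervalIntegral.integral_congr fun x hx => ?_
    ring
  rw [← hflip] at hsum
  rw [I1_eval hq] at hsum
  have harith : (1/2:ℝ)^(q+1) * 2 / (q+1) = 2 * ((1/2:ℝ)^(q+1) / (q+1)) := by ring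
  linarith

lemma kq_eval {q : ℝ} (hq : 0 < q) (A B : ℝ) :
    ∫ t in (0:ℝ)..1, |1/2 - t|^q * ((1-t)*B + t*A)
      = (A + B) * (1/2:ℝ)^(q+1) / (q+1) := by
  have hintq := abs_rpow_intble hq (1/2) (0:ℝ) 1
  have hintt : IntervalIntegrable (fun t : ℝ => |1/2 - t|^q * t) volume 0 1 :=
    hintq.mul_continuousOn (by fun_prop)
  have h1 : ∫ t in (0:ℝ)..1, |1/2 - t|^q * ((1-t)*B + t*A)
      = B * ((∫ t in (0:ℝ)..1, |1/2 - t|^q) - ∫ t in (0:ℝ)..1, |1/2 - t|^q * t)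
        + A * ∫ t in (0:ℝ)..1, |1/2 - t|^q * t := by
    rw [← intervalIntegral.integral_sub hintq hintt]
    rw [← intervalIntegral.integral_const_mul, ← intervalIntegral.integral_const_mul,
      ← intervalIntegral.integral_add]
    · refine intervalIntegral.integral_congr fun x hx => ?_; ring
    · exact ((hintq.sub hintt).const_mul B)
    · exact (hintt.const_mul A)
  rw [h1, I1_eval hq, I2_eval hq]; ring
lemma key_identity (A : Set ℝ) (hA : IsOpen A) (f : ℝ → ℝ)
    (hf1 : ∀ x ∈ A, DifferentiableAt ℝ f x)
    (hf2 : ∀ x ∈ A, DifferentiableAt ℝ (deriv f) x)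
    (hf3 : ∀ x ∈ A, DifferentiableAt ℝ (deriv (deriv f)) x)
    (b h : ℝ) (hpath : ∀ t ∈ Icc (0:ℝ) 1, b + t*h ∈ A)
    (hK : IntervalIntegrable
      (fun t => h^4 * ((t^3 - 3/2*t^2 + 1/2*t) * deriv (deriv (deriv f)) (b+t*h)))
      volume 0 1) :
    (∫ x in b..(b+h), f x) - h * (f b + f (b+h)) / 2
      - (h^2/12) * (deriv f b - deriv f (b+h))
    = -(1/6) * ∫ t in (0:ℝ)..1,
        h^4 * ((t^3 - 3/2*t^2 + 1/2*t) * deriv (deriv (deriv f)) (b+t*h)) := by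
  set f1 := deriv f
  set f2 := deriv (deriv f)
  set f3 := deriv (deriv (deriv f))
  have hcontA : ContinuousOn f A := fun x hx => (hf1 x hx).continuousAt.continuousWithinAt
  have hsubIcc : ∀ t ∈ Icc (0:ℝ) 1, uIcc b (b + t*h) ⊆ A := by
    intro t ht
    intro x hx
    rcases eq_or_ne h 0 with h0 | h0
    · subst h0
      simp only [mul_zero, add_zero, Set.uIcc_self, Set.mem_singleton_iff] at hx
      subst hx
      simpa using hpath 0 (by norm_num)
    have hs : x = b + ((x - b)/h) * h := by field_simp; ring
    rw [hs]
    refine hpath _ ?_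
    rcases hx with ⟨hx1, hx2⟩
    simp only [inf_le_iff, le_sup_iff] at hx1 hx2
    rcases lt_or_gt_of_ne h0 with hneg | hpos
    · have hth : t * h ≤ 0 := by nlinarith [mul_nonneg ht.1 (neg_nonneg.mpr hneg.le)]
      have hth1 : h ≤ t * h := by nlinarith [mul_nonneg (sub_nonneg.mpr ht.2) (neg_nonneg.mpr hneg.le)]
      have hxb : x ≤ b := by rcases hx2 with h'|h' <;> linarith
      have hxh : b + h ≤ x := by rcases hx1 with h'|h' <;> linarith
      constructor
      · rw [div_nonneg_iff]; right; exact ⟨by linarith, hneg.le⟩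
      · rw [div_le_one_iff]; right; right; exact ⟨hneg, by linarith⟩
    · have hth : 0 ≤ t * h := mul_nonneg ht.1 hpos.le
      have hth1 : t * h ≤ h := by nlinarith [mul_nonneg (sub_nonneg.mpr ht.2) hpos.le]
      have hxb : b ≤ x := by rcases hx1 with h'|h' <;> linarith
      have hxh : x ≤ b + h := by rcases hx2 with h'|h' <;> linarith
      constructor
      · exact div_nonneg (by linarith) hpos.le
      · rw [div_le_one hpos]; linarith
  -- define g
  set g : ℝ → ℝ := fun t =>
    h^3 * ((t^3 - 3/2*t^2 + 1/2*t) * f2 (b+t*h))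
    - h^2 * ((3*t^2 - 3*t + 1/2) * f1 (b+t*h))
    + h * ((6*t - 3) * f (b+t*h))
    - 6 * ∫ x in b..(b+t*h), f x with hg
  have hderiv : ∀ t ∈ uIcc (0:ℝ) 1, HasDerivAt g
      (h^4 * ((t^3 - 3/2*t^2 + 1/2*t) * f3 (b+t*h))) t := by
    intro t ht
    rw [Set.uIcc_of_le (by norm_num : (0:ℝ) ≤ 1)] at ht
    have hpt : b + t*h ∈ A := hpath t ht
    have hline : HasDerivAt (fun s : ℝ => b + s*h) h t := by
      simpa using ((hasDerivAt_id t).mul_const h).const_add b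
    have hcf2 : HasDerivAt (fun s => f2 (b+s*h)) (f3 (b+t*h) * h) t := by
      have := ((hf3 _ hpt).hasDerivAt).comp t hline; exact this
    have hcf1 : HasDerivAt (fun s => f1 (b+s*h)) (f2 (b+t*h) * h) t := by
      have := ((hf2 _ hpt).hasDerivAt).comp t hline; exact this
    have hcf : HasDerivAt (fun s => f (b+s*h)) (f1 (b+t*h) * h) t :=
      ((hf1 _ hpt).hasDerivAt).comp t hline
    have hK3 : HasDerivAt (fun s : ℝ => s^3 - 3/2*s^2 + 1/2*s) (3*t^2 - 3*t + 1/2) t := by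
      have := (((hasDerivAt_pow 3 t).sub ((hasDerivAt_pow 2 t).const_mul (3/2))).add
        ((hasDerivAt_id t).const_mul (1/2)))
      refine this.congr_deriv ?_
      push_cast; ring
    have hK2 : HasDerivAt (fun s : ℝ => 3*s^2 - 3*s + 1/2) (6*t - 3) t := by
      have := (((hasDerivAt_pow 2 t).const_mul (3:ℝ)).sub ((hasDerivAt_id t).const_mul 3)).add_const (1/2)
      refine this.congr_deriv ?_
      push_cast; ring
    have hK1 : HasDerivAt (fun s : ℝ => 6*s - 3) (6:ℝ) t := by
      simpa using ((hasDerivAt_id t).const_mul (6:ℝ)).sub_const 3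
    have hFTC : HasDerivAt (fun s => ∫ x in b..(b+s*h), f x) (f (b+t*h) * h) t := by
      have hfi : IntervalIntegrable f volume b (b+t*h) :=
        (hcontA.mono (hsubIcc t ht)).intervalIntegrable
      have hmeas : StronglyMeasurableAtFilter f (𝓝 (b+t*h)) volume :=
        hcontA.stronglyMeasurableAtFilter hA _ hpt
      have hconti : ContinuousAt f (b+t*h) := (hf1 _ hpt).continuousAt
      exact (intervalIntegral.integral_hasDerivAt_right hfi hmeas hconti).comp t hline
    have := ((((hK3.mul hcf2).const_mul (h^3)).sub ((hK2.mul hcf1).const_mul (h^2))).add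
      ((hK1.mul hcf).const_mul h)).sub (hFTC.const_mul 6)
    refine this.congr_deriv ?_
    ring
  have hint : ∫ t in (0:ℝ)..1, h^4 * ((t^3 - 3/2*t^2 + 1/2*t) * f3 (b+t*h)) = g 1 - g 0 :=
    intervalIntegral.integral_eq_sub_of_hasDerivAt hderiv hK
  have hg1 : g 1 = - h^2/2 * f1 (b+h) + 3*h*(f (b+h)) - 6 * ∫ x in b..(b+h), f x := by
    rw [hg]; norm_num; ring
  have hg0 : g 0 = - h^2/2 * f1 b - 3*h*(f b) := by
    rw [hg]; norm_num; ring
  rw [hint, hg1, hg0]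
  ring


set_option maxHeartbeats 2000000 in

theorem teo23 (A : Set ℝ) (hA : IsOpen A) (η : ℝ → ℝ → ℝ)
    (hinvex : ∀ u ∈ A, ∀ v ∈ A, ∀ t ∈ Icc (0:ℝ) 1, u + t * η v u ∈ A)
    (a b : ℝ) (ha : a ∈ A) (hb : b ∈ A) (hη : η a b ≠ 0) (f : ℝ → ℝ)
    (hf1 : ∀ x ∈ A, DifferentiableAt ℝ f x)
    (hf2 : ∀ x ∈ A, DifferentiableAt ℝ (deriv f) x)
    (hf3 : ∀ x ∈ A, DifferentiableAt ℝ (deriv (deriv f)) x)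
    (hint : IntervalIntegrable (deriv (deriv (deriv f))) volume b (b + η a b))
    (p q : ℝ) (hq : 1 < q) (hpq : 1 / p + 1 / q = 1)
    (hpre : ∀ u ∈ A, ∀ v ∈ A, ∀ t ∈ Icc (0:ℝ) 1,
      |deriv (deriv (deriv f)) (u + t * η v u)| ^ q
        ≤ (1 - t) * |deriv (deriv (deriv f)) u| ^ q
          + t * |deriv (deriv (deriv f)) v| ^ q) :
    |(∫ x in b..(b + η a b), f x) - η a b * (f b + f (b + η a b)) / 2
      - ((η a b) ^ 2 / 12) * (deriv f b - deriv f (b + η a b))|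
    ≤ ((η a b) ^ 4 / 96) * (Real.sqrt π) ^ (1 / p) *
        (Real.Gamma (1 + p) / Real.Gamma (3 / 2 + p)) ^ (1 / p) *
        (1 / (q + 1)) ^ (1 / q) *
        (|deriv (deriv (deriv f)) a| ^ q + |deriv (deriv (deriv f)) b| ^ q)
          ^ (1 / q) := by
  set h := η a b with hh
  have hq0 : (0:ℝ) < q := by linarith
  have h1q : 0 < 1/q := one_div_pos.mpr hq0
  have h1q1 : 1/q < 1 := by rw [div_lt_one hq0]; exact hq
  have h1p : 0 < 1/p := by linarith
  have hp0 : 0 < p := one_div_pos.mp h1p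
  have hp1 : 1 < p := by
    by_contra hcon; push_neg at hcon
    have : 1 ≤ 1/p := by rw [le_div_iff₀ hp0]; linarith
    linarith
  have hconj : Real.HolderConjugate p q := Real.holderConjugate_iff.mpr ⟨hp1, by rw [← one_div, ← one_div]; exact hpq⟩
  have h01 : (0:ℝ) ≤ 1 := by norm_num
  set CA := |deriv (deriv (deriv f)) a| ^ q with hCA
  set CB := |deriv (deriv (deriv f)) b| ^ q with hCB
  have hCA0 : 0 ≤ CA := Real.rpow_nonneg (abs_nonneg _) q
  have hCB0 : 0 ≤ CB := Real.rpow_nonneg (abs_nonneg _) q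
  -- path
  have hpath : ∀ t ∈ Icc (0:ℝ) 1, b + t*h ∈ A := fun t ht => hinvex b hb a ha t ht
  -- integrability of composition
  have hcomp : IntervalIntegrable (fun t => deriv (deriv (deriv f)) (b + t*h)) volume 0 1 := by
    have h1 : IntervalIntegrable (fun x => deriv (deriv (deriv f)) (b + x)) volume 0 h := by
      simpa using hint.comp_add_left b
    have h2 : IntervalIntegrable (fun x => deriv (deriv (deriv f)) (b + h*x)) volume 0 1 := by
      have := h1.comp_mul_left (c := h)
      simpa [div_self hη] using this
    have he : (fun x => deriv (deriv (deriv f)) (b + h*x))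
        = (fun t => deriv (deriv (deriv f)) (b + t*h)) := by
      funext x; rw [mul_comm]
    rwa [he] at h2
  have hK : IntervalIntegrable
      (fun t => h^4 * ((t^3 - 3/2*t^2 + 1/2*t) * deriv (deriv (deriv f)) (b+t*h)))
      volume 0 1 := by
    have hc : ContinuousOn (fun t : ℝ => h^4 * (t^3 - 3/2*t^2 + 1/2*t)) (uIcc 0 1) := by
      fun_prop
    simpa [mul_assoc] using hcomp.continuousOn_mul hc
  -- the identity
  have hid := key_identity A hA f hf1 hf2 hf3 b h hpath hK
  rw [hid, abs_mul, (by norm_num : |(-(1/6):ℝ)| = 1/6)]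
  -- continuity facts
  have hcontG : Continuous (fun t : ℝ => |1/2 - t| * ((1-t)*CB + t*CA)^(1/q)) := by
    refine Continuous.mul (by fun_prop) ?_
    exact Continuous.rpow_const (by fun_prop) (fun x => Or.inr h1q.le)
  -- pointwise bound from preinvexity
  have hptw : ∀ t ∈ Icc (0:ℝ) 1,
      |deriv (deriv (deriv f)) (b + t*h)| ≤ ((1-t)*CB + t*CA)^(1/q) := by
    intro t ht
    have hfq := hpre b hb a ha t ht
    have h0 : |deriv (deriv (deriv f)) (b + t*h)|
        = (|deriv (deriv (deriv f)) (b + t*h)|^q)^(1/q) := by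
      rw [← Real.rpow_mul (abs_nonneg _), mul_one_div_cancel hq0.ne', Real.rpow_one]
    rw [h0]
    exact Real.rpow_le_rpow (Real.rpow_nonneg (abs_nonneg _) q) hfq h1q.le
  -- integrability of middle integrands
  have hI1 : IntervalIntegrable
      (fun t => (t*(1-t)) * (|1/2 - t| * |deriv (deriv (deriv f)) (b + t*h)|)) volume 0 1 := by
    have habs : IntervalIntegrable (fun t => |deriv (deriv (deriv f)) (b + t*h)|) volume 0 1 := by
      simpa [Real.norm_eq_abs] using hcomp.norm
    have hc : ContinuousOn (fun t : ℝ => t*(1-t) * |1/2 - t|) (uIcc 0 1) := by fun_prop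
    simpa [mul_assoc] using habs.continuousOn_mul hc
  have hI2 : IntervalIntegrable
      (fun t => (t*(1-t)) * (|1/2 - t| * ((1-t)*CB + t*CA)^(1/q))) volume 0 1 :=
    (Continuous.mul (by fun_prop) hcontG).intervalIntegrable 0 1
  -- Hölder setup
  set μ : Measure ℝ := volume.restrict (Ioc (0:ℝ) 1) with hμ
  haveI : IsFiniteMeasure μ :=
    ⟨by rw [hμ, Measure.restrict_apply_univ, Real.volume_Ioc]; exact ENNReal.ofReal_lt_top⟩
  have hFnn : 0 ≤ᵐ[μ] (fun t : ℝ => t*(1-t)) := by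
    filter_upwards [ae_restrict_mem measurableSet_Ioc] with t ht
    exact mul_nonneg ht.1.le (by linarith [ht.2])
  have hGnn : 0 ≤ᵐ[μ] (fun t : ℝ => |1/2 - t| * ((1-t)*CB + t*CA)^(1/q)) := by
    filter_upwards [ae_restrict_mem measurableSet_Ioc] with t ht
    have hR0 : 0 ≤ (1-t)*CB + t*CA := by
      have := ht.1; have := ht.2
      have h1 : 0 ≤ (1-t)*CB := mul_nonneg (by linarith) hCB0
      have h2 : 0 ≤ t*CA := mul_nonneg (by linarith) hCA0
      linarith
    exact mul_nonneg (abs_nonneg _) (Real.rpow_nonneg hR0 _)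
  have hFmem : MemLp (fun t : ℝ => t*(1-t)) (ENNReal.ofReal p) μ := by
    refine MemLp.of_bound (Continuous.aestronglyMeasurable (by fun_prop)) 1 ?_
    filter_upwards [ae_restrict_mem measurableSet_Ioc] with t ht
    rw [Real.norm_eq_abs]
    rcases ht with ⟨ht1, ht2⟩
    rw [abs_le]; constructor <;> nlinarith
  have hGmem : MemLp (fun t : ℝ => |1/2 - t| * ((1-t)*CB + t*CA)^(1/q))
      (ENNReal.ofReal q) μ := by
    refine MemLp.of_bound hcontG.aestronglyMeasurable ((1/2) * (CA + CB)^(1/q)) ?_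
    filter_upwards [ae_restrict_mem measurableSet_Ioc] with t ht
    rcases ht with ⟨ht1, ht2⟩
    have hR0 : 0 ≤ (1-t)*CB + t*CA := by
      have h1 : 0 ≤ (1-t)*CB := mul_nonneg (by linarith) hCB0
      have h2 : 0 ≤ t*CA := mul_nonneg (by linarith) hCA0
      linarith
    rw [Real.norm_eq_abs, abs_of_nonneg (mul_nonneg (abs_nonneg _) (Real.rpow_nonneg hR0 _))]
    refine mul_le_mul ?_ ?_ (Real.rpow_nonneg hR0 _) (by norm_num)
    · rw [abs_le]; constructor <;> linarith
    · refine Real.rpow_le_rpow hR0 ?_ h1q.le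
      nlinarith
  have hholder := MeasureTheory.integral_mul_le_Lp_mul_Lq_of_nonneg (μ := μ) hconj
    hFnn hGnn hFmem hGmem
  -- evaluate the two integrals
  have hFp : ∫ t : ℝ, (t*(1-t))^p ∂μ
      = Real.sqrt π * (Real.Gamma (1+p) / Real.Gamma (3/2+p)) * (1/2:ℝ)^(2*p+1) := by
    rw [hμ, ← intervalIntegral.integral_of_le h01]
    exact beta_eval hp0
  have hGq : ∫ t : ℝ, (|1/2 - t| * ((1-t)*CB + t*CA)^(1/q))^q ∂μ
      = (CA + CB) * (1/2:ℝ)^(q+1) / (q+1) := by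
    have hcongr : ∫ t : ℝ, (|1/2 - t| * ((1-t)*CB + t*CA)^(1/q))^q ∂μ
        = ∫ t : ℝ, |1/2 - t|^q * ((1-t)*CB + t*CA) ∂μ := by
      rw [hμ]
      refine setIntegral_congr_fun measurableSet_Ioc (fun t ht => ?_)
      rcases ht with ⟨ht1, ht2⟩
      have hR0 : 0 ≤ (1-t)*CB + t*CA := by
        have h1 : 0 ≤ (1-t)*CB := mul_nonneg (by linarith) hCB0
        have h2 : 0 ≤ t*CA := mul_nonneg (by linarith) hCA0
        linarith
      rw [Real.mul_rpow (abs_nonneg _) (Real.rpow_nonneg hR0 _),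
        ← Real.rpow_mul hR0, one_div_mul_cancel hq0.ne', Real.rpow_one]
    rw [hcongr, hμ, ← intervalIntegral.integral_of_le h01]
    exact kq_eval hq0 CA CB
  rw [hFp, hGq] at hholder
  -- main chain
  calc (1/6 : ℝ) * |∫ t in (0:ℝ)..1,
        h^4 * ((t^3 - 3/2*t^2 + 1/2*t) * deriv (deriv (deriv f)) (b+t*h))|
      = (1/6) * (h^4 * |∫ t in (0:ℝ)..1,
          (t^3 - 3/2*t^2 + 1/2*t) * deriv (deriv (deriv f)) (b+t*h)|) := by
        rw [intervalIntegral.integral_const_mul, abs_mul,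
          abs_of_nonneg (by positivity : (0:ℝ) ≤ h^4)]
    _ ≤ (1/6) * (h^4 * ∫ t in (0:ℝ)..1,
          |(t^3 - 3/2*t^2 + 1/2*t) * deriv (deriv (deriv f)) (b+t*h)|) := by
        refine mul_le_mul_of_nonneg_left (mul_le_mul_of_nonneg_left ?_ (by positivity)) (by norm_num)
        exact intervalIntegral.abs_integral_le_integral_abs h01
    _ = (1/6) * (h^4 * ∫ t in (0:ℝ)..1,
          (t*(1-t)) * (|1/2 - t| * |deriv (deriv (deriv f)) (b+t*h)|)) := by
        congr 2
        refine intervalIntegral.integral_congr fun t ht => ?_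
        rw [Set.uIcc_of_le h01] at ht
        rw [abs_mul, (by ring : t^3 - 3/2*t^2 + 1/2*t = (t*(1-t)) * (1/2 - t)), abs_mul,
          abs_of_nonneg (mul_nonneg ht.1 (by linarith [ht.2])), mul_assoc]
    _ ≤ (1/6) * (h^4 * ∫ t in (0:ℝ)..1,
          (t*(1-t)) * (|1/2 - t| * ((1-t)*CB + t*CA)^(1/q))) := by
        refine mul_le_mul_of_nonneg_left (mul_le_mul_of_nonneg_left ?_ (by positivity)) (by norm_num)
        refine intervalIntegral.integral_mono_on h01 hI1 hI2 (fun t ht => ?_)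
        refine mul_le_mul_of_nonneg_left
          (mul_le_mul_of_nonneg_left (hptw t ht) (abs_nonneg _)) ?_
        exact mul_nonneg ht.1 (by linarith [ht.2])
    _ ≤ (1/6) * (h^4 *
          ((Real.sqrt π * (Real.Gamma (1+p) / Real.Gamma (3/2+p)) * (1/2:ℝ)^(2*p+1))^(1/p)
          * ((CA + CB) * (1/2:ℝ)^(q+1) / (q+1))^(1/q))) := by
        refine mul_le_mul_of_nonneg_left (mul_le_mul_of_nonneg_left ?_ (by positivity)) (by norm_num)
        rw [intervalIntegral.integral_of_le h01]
        exact hholder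
    _ = h ^ 4 / 96 * (Real.sqrt π) ^ (1/p) *
        (Real.Gamma (1 + p) / Real.Gamma (3/2 + p)) ^ (1/p) *
        (1 / (q + 1)) ^ (1/q) * (CA + CB) ^ (1/q) := by
        have hΓ : 0 ≤ Real.Gamma (1+p) / Real.Gamma (3/2+p) :=
          div_nonneg (Real.Gamma_pos_of_pos (by linarith)).le
            (Real.Gamma_pos_of_pos (by linarith)).le
        have e1 : ((Real.sqrt π * (Real.Gamma (1+p) / Real.Gamma (3/2+p)) * (1/2:ℝ)^(2*p+1))^(1/p))
            = (Real.sqrt π)^(1/p) * (Real.Gamma (1+p) / Real.Gamma (3/2+p))^(1/p)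
              * ((1/2:ℝ)^((2*p+1)*(1/p))) := by
          rw [Real.mul_rpow (mul_nonneg (Real.sqrt_nonneg _) hΓ)
              (Real.rpow_nonneg (by norm_num) _),
            Real.mul_rpow (Real.sqrt_nonneg _) hΓ, ← Real.rpow_mul (by norm_num)]
        have e2 : (((CA + CB) * (1/2:ℝ)^(q+1) / (q+1))^(1/q))
            = (CA + CB)^(1/q) * ((1/2:ℝ)^((q+1)*(1/q))) * ((1/(q+1))^(1/q)) := by
          rw [(by ring : (CA + CB) * (1/2:ℝ)^(q+1) / (q+1)
              = (CA + CB) * ((1/2:ℝ)^(q+1)) * (1/(q+1))),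
            Real.mul_rpow (mul_nonneg (by linarith) (Real.rpow_nonneg (by norm_num) _))
              (by positivity),
            Real.mul_rpow (by linarith) (Real.rpow_nonneg (by norm_num) _),
            ← Real.rpow_mul (by norm_num)]
        have hx : ((1/2:ℝ)^((2*p+1)*(1/p))) * ((1/2:ℝ)^((q+1)*(1/q))) = 1/16 := by
          rw [← Real.rpow_add (by norm_num : (0:ℝ) < 1/2)]
          have hexp : (2*p+1)*(1/p) + (q+1)*(1/q) = 4 := by
            have e3 : (2*p+1)*(1/p) = 2 + 1/p := by field_simp
            have e4 : (q+1)*(1/q) = 1 + 1/q := by field_simp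
            rw [e3, e4]; linarith
          rw [hexp, (by norm_num : (4:ℝ) = ((4:ℕ):ℝ)), Real.rpow_natCast]
          norm_num
        rw [e1, e2]
        linear_combination ((1/6) * h^4 * (Real.sqrt π)^(1/p)
          * (Real.Gamma (1+p) / Real.Gamma (3/2+p))^(1/p)
          * (CA + CB)^(1/q) * ((1/(q+1))^(1/q))) * hx
end
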